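/- arXiv:1612.04420 — 9 statements merged into one kernel-verified Lean document; each statement's English description precedes it below -/
import Mathlib

section
/- Let n ≥ 2 and let A : {0,1}^n → ℝ be a real binary tensor of format 2×⋯×2 (n factors). Then for every k ∈ {1,…,n}, the k-th Gram determinant is bounded by the sum of the others: d_k(A) ≤ Σ_{j≠k} d_j(A). -/
/-- The multi-index in `{0,1}^n` whose `k`-th coordinate is `b` and whose remaining
coordinates are given by `r`. -/
def iotaIdx (n : ℕ) (k : Fin n) (b : Bool) (r : {j : Fin n // j ≠ k} → Bool) : Fin n → Bool :=
  fun j => if h : j = k then b else r ⟨j, h⟩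

/-- The `k`-th Gram determinant of a real binary tensor `A` of format `2 × ⋯ × 2`:
`det (M Mᵀ)` where `M` is the `2 × 2^(n-1)` flattening of `A` along direction `k`. -/
noncomputable def gramDet (n : ℕ) (A : (Fin n → Bool) → ℝ) (k : Fin n) : ℝ :=
  (∑ r : {j : Fin n // j ≠ k} → Bool, (A (iotaIdx n k false r)) ^ 2) *
    (∑ r : {j : Fin n // j ≠ k} → Bool, (A (iotaIdx n k true r)) ^ 2) -
  (∑ r : {j : Fin n // j ≠ k} → Bool, A (iotaIdx n k false r) * A (iotaIdx n k true r)) ^ 2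

namespace GramAux

open Finset

variable {n : ℕ}

/-- Swap the coordinates in `T` between the two components of a pair of indices. -/
def swapT (T : Finset (Fin n)) (p : (Fin n → Bool) × (Fin n → Bool)) :
    (Fin n → Bool) × (Fin n → Bool) :=
  (fun j => if j ∈ T then p.2 j else p.1 j, fun j => if j ∈ T then p.1 j else p.2 j)

def Phi (A : (Fin n → Bool) → ℝ) (p : (Fin n → Bool) × (Fin n → Bool)) : ℝ :=
  A p.1 * A p.2

noncomputable def Q (A : (Fin n → Bool) → ℝ) (T : Finset (Fin n)) : ℝ :=
  ∑ p : (Fin n → Bool) × (Fin n → Bool), Phi A p * Phi A (swapT T p)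

lemma swapT_empty (p : (Fin n → Bool) × (Fin n → Bool)) : swapT (∅ : Finset (Fin n)) p = p := by
  unfold swapT; simp

lemma swapT_swapT (a b : Finset (Fin n)) (p : (Fin n → Bool) × (Fin n → Bool)) :
    swapT a (swapT b p) = swapT (symmDiff a b) p := by
  refine Prod.ext ?_ ?_ <;> funext j <;>
    by_cases ha : j ∈ a <;> by_cases hb : j ∈ b <;>
      simp [swapT, Finset.mem_symmDiff, ha, hb]

lemma swapT_involutive (a : Finset (Fin n)) : Function.Involutive (swapT a) := by
  intro p
  rw [swapT_swapT, symmDiff_self]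
  exact swapT_empty p

lemma sum_swap_swap (A : (Fin n → Bool) → ℝ) (a b : Finset (Fin n)) :
    ∑ p : (Fin n → Bool) × (Fin n → Bool), Phi A (swapT a p) * Phi A (swapT b p)
      = Q A (symmDiff a b) := by
  have h := Equiv.sum_comp ((swapT_involutive (n := n) a).toPerm _)
      (fun p => Phi A p * Phi A (swapT (symmDiff a b) p))
  rw [Q, ← h]
  refine Finset.sum_congr rfl fun p _ => ?_
  have hcoe : ((swapT_involutive (n := n) a).toPerm _) p = swapT a p := rfl
  rw [hcoe, swapT_swapT]
  have : symmDiff (symmDiff a b) a = b := by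
    rw [symmDiff_comm a b, symmDiff_symmDiff_cancel_right]
  rw [this]

lemma sum_phi_swap (A : (Fin n → Bool) → ℝ) (t : Finset (Fin n)) :
    ∑ p : (Fin n → Bool) × (Fin n → Bool), Phi A p * Phi A (swapT t p) = Q A t := rfl

lemma sum_phi_sq (A : (Fin n → Bool) → ℝ) :
    ∑ p : (Fin n → Bool) × (Fin n → Bool), Phi A p * Phi A p = Q A ∅ := by
  rw [Q]
  refine Finset.sum_congr rfl fun p _ => ?_
  rw [swapT_empty]

lemma sum_swap_sq (A : (Fin n → Bool) → ℝ) (a : Finset (Fin n)) :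
    ∑ p : (Fin n → Bool) × (Fin n → Bool), Phi A (swapT a p) * Phi A (swapT a p) = Q A ∅ := by
  rw [sum_swap_swap, symmDiff_self]
  rfl

/-- The key positivity: `(1-S_a)(1-S_b)` is PSD. -/
lemma key (A : (Fin n → Bool) → ℝ) (a b : Finset (Fin n)) :
    0 ≤ Q A ∅ - Q A a - Q A b + Q A (symmDiff a b) := by
  have h0 : (0:ℝ) ≤ ∑ p : (Fin n → Bool) × (Fin n → Bool),
      (Phi A p - Phi A (swapT a p) - Phi A (swapT b p) + Phi A (swapT (symmDiff a b) p))^2 :=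
    Finset.sum_nonneg fun p _ => sq_nonneg _
  have hexp : ∑ p : (Fin n → Bool) × (Fin n → Bool),
      (Phi A p - Phi A (swapT a p) - Phi A (swapT b p) + Phi A (swapT (symmDiff a b) p))^2
      = 4 * Q A ∅ - 4 * Q A a - 4 * Q A b + 4 * Q A (symmDiff a b) := by
    have hpt : ∀ p : (Fin n → Bool) × (Fin n → Bool),
        (Phi A p - Phi A (swapT a p) - Phi A (swapT b p) + Phi A (swapT (symmDiff a b) p))^2
        = Phi A p * Phi A p + Phi A (swapT a p) * Phi A (swapT a p)
          + Phi A (swapT b p) * Phi A (swapT b p)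
          + Phi A (swapT (symmDiff a b) p) * Phi A (swapT (symmDiff a b) p)
          - 2 * (Phi A p * Phi A (swapT a p)) - 2 * (Phi A p * Phi A (swapT b p))
          + 2 * (Phi A p * Phi A (swapT (symmDiff a b) p))
          + 2 * (Phi A (swapT a p) * Phi A (swapT b p))
          - 2 * (Phi A (swapT a p) * Phi A (swapT (symmDiff a b) p))
          - 2 * (Phi A (swapT b p) * Phi A (swapT (symmDiff a b) p)) := fun p => by ring
    rw [Finset.sum_congr rfl fun p _ => hpt p]
    simp only [Finset.sum_add_distrib, Finset.sum_sub_distrib, ← Finset.mul_sum]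
    rw [sum_phi_sq, sum_swap_sq, sum_swap_sq, sum_swap_sq, sum_phi_swap, sum_phi_swap,
      sum_phi_swap, sum_swap_swap, sum_swap_swap, sum_swap_swap]
    have h1 : symmDiff a (symmDiff a b) = b := symmDiff_symmDiff_cancel_left a b
    have h2 : symmDiff b (symmDiff a b) = a := by
      rw [symmDiff_comm b (symmDiff a b), symmDiff_symmDiff_cancel_right]
    rw [h1, h2]
    ring
  rw [hexp] at h0
  linarith

lemma step (A : (Fin n → Bool) → ℝ) (K : Finset (Fin n)) :
    Q A ∅ - Q A K ≤ ∑ j ∈ K, (Q A ∅ - Q A {j}) := by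
  classical
  induction K using Finset.induction_on with
  | empty => simp
  | @insert j S hjS ih =>
    have hkey := key A S {j}
    have hdisj : symmDiff S {j} = insert j S := by
      rw [Disjoint.symmDiff_eq_sup (Finset.disjoint_singleton_right.mpr hjS)]
      rw [Finset.sup_eq_union, Finset.union_comm, ← Finset.insert_eq]
    rw [hdisj] at hkey
    rw [Finset.sum_insert hjS]
    linarith

lemma Q_compl (A : (Fin n → Bool) → ℝ) (T : Finset (Fin n)) : Q A Tᶜ = Q A T := by
  classical
  have hu : ∀ p : (Fin n → Bool) × (Fin n → Bool),
      swapT (Finset.univ : Finset (Fin n)) p = Prod.swap p := by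
    intro p; refine Prod.ext ?_ ?_ <;> funext j <;> simp [swapT]
  have h := Equiv.sum_comp ((swapT_involutive (Finset.univ : Finset (Fin n))).toPerm _)
      (fun p => Phi A p * Phi A (swapT Tᶜ p))
  rw [Q, ← h]
  refine Finset.sum_congr rfl fun p _ => ?_
  have hcoe : ((swapT_involutive (n := n) (Finset.univ : Finset (Fin n))).toPerm _) p
      = swapT Finset.univ p := rfl
  rw [hcoe, swapT_swapT]
  have h1 : symmDiff Tᶜ (Finset.univ : Finset (Fin n)) = T := by
    rw [← Finset.top_eq_univ, symmDiff_top]; exact compl_compl T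
  rw [h1]
  have h2 : Phi A (swapT (Finset.univ : Finset (Fin n)) p) = Phi A p := by
    rw [hu]; simp [Phi, mul_comm]
  rw [h2]

lemma res_iota (k : Fin n) (b : Bool) (r : {j : Fin n // j ≠ k} → Bool)
    (j : {j : Fin n // j ≠ k}) : iotaIdx n k b r j.1 = r j := by
  rw [iotaIdx, dif_neg j.2]

def splitEquiv (k : Fin n) : (Bool × ({j : Fin n // j ≠ k} → Bool)) ≃ (Fin n → Bool) where
  toFun br := iotaIdx n k br.1 br.2
  invFun x := (x k, fun j => x j.1)
  left_inv := by
    rintro ⟨b, r⟩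
    refine Prod.ext ?_ ?_
    · simp [iotaIdx]
    · funext j; exact res_iota k b r j
  right_inv := by
    intro x; funext j
    by_cases h : j = k
    · subst h; simp [iotaIdx]
    · simp [iotaIdx, h]

lemma sum_split (k : Fin n) (f : (Fin n → Bool) → ℝ) :
    ∑ x, f x = ∑ b : Bool, ∑ r : {j : Fin n // j ≠ k} → Bool, f (iotaIdx n k b r) := by
  rw [← Equiv.sum_comp (splitEquiv k) f, Fintype.sum_prod_type]
  rfl

lemma swapT_iota (k : Fin n) (b b' : Bool) (r s : {j : Fin n // j ≠ k} → Bool) :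
    swapT {k} (iotaIdx n k b r, iotaIdx n k b' s) = (iotaIdx n k b' r, iotaIdx n k b s) := by
  refine Prod.ext ?_ ?_ <;> funext j <;> by_cases h : j = k
  · subst h; simp [swapT, iotaIdx]
  · simp [swapT, iotaIdx, h]
  · subst h; simp [swapT, iotaIdx]
  · simp [swapT, iotaIdx, h]

lemma bridge (A : (Fin n → Bool) → ℝ) (k : Fin n) :
    Q A ∅ - Q A {k} = 2 * gramDet n A k := by
  classical
  have h0 : Q A ∅ = (∑ x, A x * A x) * (∑ x, A x * A x) := by
    rw [Q, Fintype.sum_prod_type, Finset.sum_mul_sum]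
    refine Finset.sum_congr rfl fun x _ => Finset.sum_congr rfl fun y _ => ?_
    rw [swapT_empty]
    simp [Phi]
    ring
  have hk : Q A {k} = ∑ b : Bool, ∑ b' : Bool,
      (∑ r : {j : Fin n // j ≠ k} → Bool, A (iotaIdx n k b r) * A (iotaIdx n k b' r)) *
      (∑ s : {j : Fin n // j ≠ k} → Bool, A (iotaIdx n k b' s) * A (iotaIdx n k b s)) := by
    calc Q A {k} = ∑ x, ∑ y, Phi A (x, y) * Phi A (swapT {k} (x, y)) := by
          rw [Q, Fintype.sum_prod_type]
      _ = ∑ b : Bool, ∑ r : {j : Fin n // j ≠ k} → Bool,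
            ∑ y, Phi A (iotaIdx n k b r, y) * Phi A (swapT {k} (iotaIdx n k b r, y)) :=
          sum_split k _
      _ = ∑ b : Bool, ∑ r : {j : Fin n // j ≠ k} → Bool, ∑ b' : Bool,
            ∑ s : {j : Fin n // j ≠ k} → Bool,
            Phi A (iotaIdx n k b r, iotaIdx n k b' s) *
              Phi A (swapT {k} (iotaIdx n k b r, iotaIdx n k b' s)) := by
          refine Finset.sum_congr rfl fun b _ => Finset.sum_congr rfl fun r _ => ?_
          exact sum_split k _
      _ = ∑ b : Bool, ∑ r : {j : Fin n // j ≠ k} → Bool, ∑ b' : Bool,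
            ∑ s : {j : Fin n // j ≠ k} → Bool,
            (A (iotaIdx n k b r) * A (iotaIdx n k b' r)) *
              (A (iotaIdx n k b' s) * A (iotaIdx n k b s)) := by
          refine Finset.sum_congr rfl fun b _ => Finset.sum_congr rfl fun r _ =>
            Finset.sum_congr rfl fun b' _ => Finset.sum_congr rfl fun s _ => ?_
          rw [swapT_iota]
          simp [Phi]
          ring
      _ = ∑ b : Bool, ∑ b' : Bool, ∑ r : {j : Fin n // j ≠ k} → Bool,
            ∑ s : {j : Fin n // j ≠ k} → Bool,
            (A (iotaIdx n k b r) * A (iotaIdx n k b' r)) *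
              (A (iotaIdx n k b' s) * A (iotaIdx n k b s)) := by
          refine Finset.sum_congr rfl fun b _ => ?_
          exact Finset.sum_comm
      _ = _ := by
          refine Finset.sum_congr rfl fun b _ => Finset.sum_congr rfl fun b' _ => ?_
          rw [Finset.sum_mul_sum]
  have hx : ∑ x, A x * A x
      = (∑ r : {j : Fin n // j ≠ k} → Bool, A (iotaIdx n k true r) * A (iotaIdx n k true r))
        + (∑ r : {j : Fin n // j ≠ k} → Bool, A (iotaIdx n k false r) * A (iotaIdx n k false r)) := by
    rw [sum_split k]
    exact Fintype.sum_bool _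
  set S0 := ∑ r : {j : Fin n // j ≠ k} → Bool, A (iotaIdx n k false r) * A (iotaIdx n k false r) with hS0
  set S1 := ∑ r : {j : Fin n // j ≠ k} → Bool, A (iotaIdx n k true r) * A (iotaIdx n k true r) with hS1
  set C := ∑ r : {j : Fin n // j ≠ k} → Bool, A (iotaIdx n k false r) * A (iotaIdx n k true r) with hC
  have hCC : ∑ r : {j : Fin n // j ≠ k} → Bool, A (iotaIdx n k true r) * A (iotaIdx n k false r) = C := by
    rw [hC]; exact Finset.sum_congr rfl fun r _ => mul_comm _ _
  have hg : gramDet n A k = S0 * S1 - C ^ 2 := by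
    rw [gramDet, hC, hS0, hS1]
    congr 1
    congr 1 <;> exact Finset.sum_congr rfl fun r _ => (pow_two _)
  rw [h0, hk, hx, hg]
  rw [Fintype.sum_bool]
  rw [Fintype.sum_bool, Fintype.sum_bool]
  rw [hCC]
  ring

end GramAux

/-- Each Gram determinant of a real binary tensor is bounded by the sum of the others. -/
theorem gramDet_le_sum_others (n : ℕ) (hn : 2 ≤ n) (A : (Fin n → Bool) → ℝ) (k : Fin n) :
    gramDet n A k ≤ ∑ j ∈ Finset.univ.erase k, gramDet n A j := by
  classical
  have hmain := GramAux.step A (Finset.univ.erase k)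
  have hcomp : (Finset.univ.erase k : Finset (Fin n)) = ({k} : Finset (Fin n))ᶜ :=
    (Finset.compl_singleton k).symm
  have hQ : GramAux.Q A (Finset.univ.erase k) = GramAux.Q A {k} := by
    rw [hcomp]; exact GramAux.Q_compl A {k}
  rw [hQ] at hmain
  have hsum : ∑ j ∈ Finset.univ.erase k, (GramAux.Q A ∅ - GramAux.Q A {j})
      = 2 * ∑ j ∈ Finset.univ.erase k, gramDet n A j := by
    rw [Finset.mul_sum]
    exact Finset.sum_congr rfl fun j _ => GramAux.bridge A j
  rw [hsum, GramAux.bridge A k] at hmain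
  linarith
end

section
/- Let n ≥ 2. Let 𝒢 : ({0,1}^n → ℝ) → ℝ^n be the map A ↦ (d₁(A),…,d_n(A)) sending a real binary tensor to its tuple of Gram determinants, and let 𝐵 = {A : Σ_v A(v)² ≤ 1} be the unit ball of tensors. Then the convex hull of the Gram locus 𝒢(𝐵) equals the polytope {(d₁,…,d_n) ∈ ℝ^n : 0 ≤ d_i ≤ 1/4 for all i, and d_i ≤ Σ_{j≠i} d_j for all i}. -/
/-!
The Gram locus lies in the polytope: `d_k ≥ 0` is Cauchy–Schwarz and `d_k ≤ 1/4` is AM–GM. For the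
polygon inequality `d_i ≤ ∑_{j ≠ i} d_j`, write `4 d_k` as the sum, over the translations `g` of the
cube `{0,1}^n` with `g_k = 1`, of the Dirichlet energies in direction `e_k` of the `g`-periodic
functions `v ↦ A(v) A(v + g)`. For a `g`-periodic function the energy in one direction of the
support of `g` is at most the sum of the energies in the other directions of that support: split
the function into its even and odd parts under `e_j` for another `j` in the support; the even part
is periodic under `g + e_j`, which has smaller support, and the odd part has maximal energy in
direction `e_j`.

Conversely, the points `(1/4) 1_S` with `|S| ≠ 1` are the Gram tuples of the tensors
`(δ_0 + δ_{1_S}) / √2`, and they span the polytope: a point at which a polygon inequality is tight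
is a combination of the points for two-element sets, and any other point can be pushed away from
`(1/4) 1_T`, `T` its support, until it becomes tight or loses a coordinate.
-/

open Finset Function

theorem lagrange_identity {ι R : Type*} [CommRing R] (s : Finset ι) (f g : ι → R) :
    ∑ i ∈ s, ∑ j ∈ s, (f i * g j - f j * g i) ^ 2 =
      2 * ((∑ i ∈ s, f i ^ 2) * (∑ i ∈ s, g i ^ 2) - (∑ i ∈ s, f i * g i) ^ 2) := by
  have expand : ∀ i j, (f i * g j - f j * g i) ^ 2 =
      f i ^ 2 * g j ^ 2 + f j ^ 2 * g i ^ 2 - 2 * ((f i * g i) * (f j * g j)) := fun i j => by ring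
  simp only [expand, sum_add_distrib, sum_sub_distrib, ← mul_sum, ← sum_mul]
  ring

section Convex

variable {E : Type*} [AddCommGroup E] [Module ℝ E] {s : Set E}

theorem Convex.sum_smul_mem_of_zero_mem {ι : Type*} (hs : Convex ℝ s) (h0 : (0 : E) ∈ s)
    {t : Finset ι} {w : ι → ℝ} {z : ι → E} (hw₀ : ∀ i ∈ t, 0 ≤ w i) (hw₁ : ∑ i ∈ t, w i ≤ 1)
    (hz : ∀ i ∈ t, z i ∈ s) : ∑ i ∈ t, w i • z i ∈ s := by
  rcases (sum_nonneg hw₀).eq_or_lt with hW | hW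
  · rw [sum_eq_zero fun i hi => by rw [(sum_eq_zero_iff_of_nonneg hw₀).1 hW.symm i hi, zero_smul]]
    exact h0
  · have hmem : ∑ i ∈ t, (w i / ∑ j ∈ t, w j) • z i ∈ s :=
      hs.sum_mem (fun i hi => div_nonneg (hw₀ i hi) hW.le) (by rw [← sum_div, div_self hW.ne']) hz
    convert hs.smul_mem_of_zero_mem h0 hmem ⟨hW.le, hw₁⟩ using 1
    simp only [smul_sum, smul_smul, mul_div_cancel₀ _ hW.ne']

theorem Convex.mem_of_inv_smul_sub_smul_mem (hs : Convex ℝ s) {x v : E} {t : ℝ} (hv : v ∈ s)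
    (ht₀ : 0 ≤ t) (ht₁ : t < 1) (h : (1 - t)⁻¹ • (x - t • v) ∈ s) : x ∈ s := by
  convert hs hv h ht₀ (by linarith) (add_sub_cancel t 1) using 1
  rw [smul_inv_smul₀ (by linarith : 1 - t ≠ 0), add_sub_cancel]

end Convex

section DirichletEnergy

variable {G : Type*} [AddCommGroup G] [Fintype G]

noncomputable def dirichletEnergy (a : G) (ψ : G → ℝ) : ℝ := ∑ x, (ψ (x + a) - ψ x) ^ 2

lemma sum_comp_add_right (f : G → ℝ) (a : G) : ∑ x, f (x + a) = ∑ x, f x :=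
  Equiv.sum_comp (Equiv.addRight a) f

lemma dirichletEnergy_nonneg (a : G) (ψ : G → ℝ) : 0 ≤ dirichletEnergy a ψ :=
  sum_nonneg fun _ _ => sq_nonneg _

lemma dirichletEnergy_le_four_mul_sum_sq (a : G) (ψ : G → ℝ) :
    dirichletEnergy a ψ ≤ 4 * ∑ x, ψ x ^ 2 :=
  calc dirichletEnergy a ψ ≤ ∑ x, (2 * ψ (x + a) ^ 2 + 2 * ψ x ^ 2) :=
        sum_le_sum fun x _ => by nlinarith [sq_nonneg (ψ (x + a) + ψ x)]
    _ = 4 * ∑ x, ψ x ^ 2 := by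
      rw [sum_add_distrib, ← mul_sum, ← mul_sum, sum_comp_add_right (fun x => ψ x ^ 2)]
      ring

lemma Function.Periodic.dirichletEnergy_eq_zero {ψ : G → ℝ} {a : G} (h : Periodic ψ a) :
    dirichletEnergy a ψ = 0 := by
  simp [dirichletEnergy, h _]

lemma Function.Antiperiodic.sum_eq_zero {t : G → ℝ} {a : G} (h : Antiperiodic t a) :
    ∑ x, t x = 0 := by
  have := sum_comp_add_right t a
  simp only [h _, sum_neg_distrib] at this
  linarith

lemma Function.Antiperiodic.dirichletEnergy_eq {ψ : G → ℝ} {a : G} (h : Antiperiodic ψ a) :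
    dirichletEnergy a ψ = 4 * ∑ x, ψ x ^ 2 := by
  simp only [dirichletEnergy, h _, mul_sum]
  exact sum_congr rfl fun x _ => by ring

lemma dirichletEnergy_add_of_periodic_of_antiperiodic {α β : G → ℝ} {f : G}
    (hα : Periodic α f) (hβ : Antiperiodic β f) (a : G) :
    dirichletEnergy a (α + β) = dirichletEnergy a α + dirichletEnergy a β := by
  have hcross : Antiperiodic (fun x => (α (x + a) - α x) * (β (x + a) - β x)) f := fun x => by
    simp only [add_right_comm x f a, hα _, hβ _]
    ring
  have hexpand : ∀ x, ((α + β) (x + a) - (α + β) x) ^ 2 = (α (x + a) - α x) ^ 2 +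
      (β (x + a) - β x) ^ 2 + 2 * ((α (x + a) - α x) * (β (x + a) - β x)) := fun x => by
    simp only [Pi.add_apply]
    ring
  simp only [dirichletEnergy, hexpand, sum_add_distrib, ← mul_sum, hcross.sum_eq_zero, mul_zero,
    add_zero]

theorem dirichletEnergy_le_sum_dirichletEnergy {ι : Type*} (e : ι → G) (T : Finset ι)
    (he : ∀ k ∈ T, e k + e k = 0) (a : G) (ψ : G → ℝ) (hψ : Periodic ψ (a + ∑ k ∈ T, e k)) :
    dirichletEnergy a ψ ≤ ∑ k ∈ T, dirichletEnergy (e k) ψ := by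
  classical
  induction T using Finset.induction_on generalizing ψ with
  | empty =>
    rw [sum_empty, add_zero] at hψ
    rw [sum_empty, hψ.dirichletEnergy_eq_zero]
  | insert k₀ T hk₀ ih =>
    set f := e k₀
    have hf : ∀ x, x + f + f = x := fun x => by
      rw [add_assoc, he k₀ (mem_insert_self _ _), add_zero]
    set α : G → ℝ := fun x => (ψ x + ψ (x + f)) / 2
    set β : G → ℝ := fun x => (ψ x - ψ (x + f)) / 2
    have hα : Periodic α f := fun x => by simp only [α, hf]; ring
    have hβ : Antiperiodic β f := fun x => by simp only [β, hf]; ring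
    have hψαβ : ψ = α + β := funext fun x => by simp only [α, β, Pi.add_apply]; ring
    have hαT : Periodic α (a + ∑ k ∈ T, e k) := by
      rw [sum_insert hk₀, add_comm f, ← add_assoc] at hψ
      have hα' : Periodic α (a + ∑ k ∈ T, e k + f) := fun x => by
        simp only [α]
        rw [add_right_comm x, hψ, hψ]
      simpa using hα'.sub_period hα
    have hβf : dirichletEnergy a β ≤ dirichletEnergy f β :=
      hβ.dirichletEnergy_eq ▸ dirichletEnergy_le_four_mul_sum_sq a β
    have ihα := ih (fun k hk => he k (mem_insert_of_mem hk)) α hαT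
    have hαf := dirichletEnergy_nonneg f α
    have hβT := sum_nonneg fun k (_ : k ∈ T) => dirichletEnergy_nonneg (e k) β
    rw [sum_insert hk₀, hψαβ]
    simp only [dirichletEnergy_add_of_periodic_of_antiperiodic hα hβ, sum_add_distrib]
    linarith

end DirichletEnergy

section Cube

variable {n : ℕ}

lemma cube_add_self (v : Fin n → Bool) : v + v = 0 :=
  funext fun j => BooleanRing.add_self (v j)

lemma iotaIdx_apply_self (k : Fin n) (b : Bool) (r : {j : Fin n // j ≠ k} → Bool) :
    iotaIdx n k b r k = b := by
  simp [iotaIdx]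

lemma iotaIdx_add_single (k : Fin n) (b : Bool) (r : {j : Fin n // j ≠ k} → Bool) :
    iotaIdx n k b r + Pi.single k true = iotaIdx n k (!b) r := by
  funext j
  by_cases h : j = k
  · subst h
    simp only [iotaIdx, Pi.add_apply, Pi.single_eq_same, dif_pos]
    cases b <;> rfl
  · simp [iotaIdx, h]

lemma iotaIdx_eq_piSplitAt_symm (k : Fin n) (b : Bool) (r : {j : Fin n // j ≠ k} → Bool) :
    iotaIdx n k b r = (Equiv.piSplitAt k fun _ => Bool).symm (b, r) := by
  funext j
  by_cases hj : j = k
  · subst hj; simp [iotaIdx]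
  · simp [iotaIdx, hj]

lemma iotaIdx_eq_iff {k : Fin n} {b : Bool} {r : {j : Fin n // j ≠ k} → Bool}
    {v : Fin n → Bool} : iotaIdx n k b r = v ↔ b = v k ∧ r = fun j : {j // j ≠ k} => v j := by
  rw [iotaIdx_eq_piSplitAt_symm, Equiv.symm_apply_eq, Prod.ext_iff]
  rfl

lemma sum_iotaIdx_add_sum_iotaIdx {M : Type*} [AddCommMonoid M] (k : Fin n)
    (F : (Fin n → Bool) → M) :
    ∑ r, F (iotaIdx n k false r) + ∑ r, F (iotaIdx n k true r) = ∑ v, F v := by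
  rw [← (Equiv.piSplitAt k fun _ => Bool).symm.sum_comp, Fintype.sum_prod_type, Fintype.sum_bool,
    add_comm]
  simp only [iotaIdx_eq_piSplitAt_symm]

end Cube

section GramDet

variable {n : ℕ}

lemma gramDet_nonneg (A : (Fin n → Bool) → ℝ) (k : Fin n) : 0 ≤ gramDet n A k :=
  sub_nonneg.2 (sum_mul_sq_le_sq_mul_sq _ _ _)

lemma gramDet_le_sq_div_four (A : (Fin n → Bool) → ℝ) (k : Fin n) :
    gramDet n A k ≤ (∑ v, A v ^ 2) ^ 2 / 4 := by
  rw [← sum_iotaIdx_add_sum_iotaIdx k, gramDet]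
  nlinarith [sq_nonneg ((∑ r, A (iotaIdx n k false r) ^ 2) - ∑ r, A (iotaIdx n k true r) ^ 2),
    sq_nonneg (∑ r, A (iotaIdx n k false r) * A (iotaIdx n k true r))]

lemma two_mul_gramDet (A : (Fin n → Bool) → ℝ) (k : Fin n) :
    2 * gramDet n A k = ∑ r, ∑ r', (A (iotaIdx n k false r) * A (iotaIdx n k true r') -
      A (iotaIdx n k false r') * A (iotaIdx n k true r)) ^ 2 := by
  rw [gramDet, lagrange_identity]

lemma sum_dirichletEnergy_eq (A : (Fin n → Bool) → ℝ) (k : Fin n) :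
    ∑ g with g k = true, dirichletEnergy (Pi.single k true) (fun v => A v * A (v + g)) =
      ∑ v, ∑ w with w k ≠ v k,
        (A (v + Pi.single k true) * A (w + Pi.single k true) - A v * A w) ^ 2 := by
  simp only [dirichletEnergy]
  rw [sum_comm]
  refine sum_congr rfl fun v _ => sum_nbij' (v + ·) (v + ·) ?_ ?_ ?_ ?_ ?_
  · intro g hg
    simp only [mem_filter, mem_univ, true_and, Pi.add_apply] at hg ⊢
    rw [hg]
    cases v k <;> decide
  · intro w hw
    simp only [mem_filter, mem_univ, true_and, Pi.add_apply] at hw ⊢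
    revert hw
    cases v k <;> cases w k <;> decide
  · intro g _; simp only [← add_assoc, cube_add_self, zero_add]
  · intro w _; simp only [← add_assoc, cube_add_self, zero_add]
  · intro g _; simp only [add_right_comm v g]

theorem four_mul_gramDet_eq_sum_dirichletEnergy (A : (Fin n → Bool) → ℝ) (k : Fin n) :
    4 * gramDet n A k =
      ∑ g with g k = true, dirichletEnergy (Pi.single k true) (fun v => A v * A (v + g)) := by
  rw [sum_dirichletEnergy_eq]
  -- only pairs on opposite sides of the `k`-th hyperplane contribute, each giving a `2 × 2` minor
  -- of the `k`-th flattening of `A`, and every minor is met twice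
  simp only [sum_filter, ← sum_iotaIdx_add_sum_iotaIdx k, iotaIdx_apply_self, iotaIdx_add_single]
  simp only [ne_eq, not_true_eq_false, Bool.false_eq_true, Bool.true_eq_false, not_false_eq_true,
    if_true, if_false, Bool.not_false, Bool.not_true, sum_const_zero, zero_add, add_zero]
  rw [show 4 * gramDet n A k = 2 * gramDet n A k + 2 * gramDet n A k by ring, two_mul_gramDet]
  simp only [← sum_add_distrib]
  exact sum_congr rfl fun r _ => sum_congr rfl fun r' _ => by ring

lemma eq_single_add_sum_single {g : Fin n → Bool} {i : Fin n} (hi : g i = true) :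
    g = Pi.single i true + ∑ k ∈ univ.erase i with g k = true, Pi.single k true := by
  have hsingle : ∀ k, (Pi.single k (g k) : Fin n → Bool) =
      if g k = true then Pi.single k true else 0 := fun k => by
    cases g k
    · exact Pi.single_zero k
    · rfl
  conv_lhs => rw [← univ_sum_single g]
  rw [sum_congr rfl fun k _ => hsingle k, ← sum_filter, filter_erase,
    add_sum_erase _ (fun k => Pi.single k true) (by simpa using hi)]

theorem gramDet_le_sum_erase (A : (Fin n → Bool) → ℝ) (i : Fin n) :
    gramDet n A i ≤ ∑ j ∈ univ.erase i, gramDet n A j := by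
  set e : Fin n → Fin n → Bool := fun k => Pi.single k true
  set E : Fin n → (Fin n → Bool) → ℝ := fun k g => dirichletEnergy (e k) fun v => A v * A (v + g)
  have key : ∀ g, g i = true → E i g ≤ ∑ k ∈ univ.erase i with g k = true, E k g := fun g hg =>
    dirichletEnergy_le_sum_dirichletEnergy e _ (fun k _ => cube_add_self _) _ _
      (eq_single_add_sum_single hg ▸ fun v => by
        simp only [add_assoc, cube_add_self, add_zero, mul_comm])
  have : 4 * gramDet n A i ≤ 4 * ∑ j ∈ univ.erase i, gramDet n A j :=
    calc 4 * gramDet n A i = ∑ g with g i = true, E i g :=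
          four_mul_gramDet_eq_sum_dirichletEnergy A i
      _ ≤ ∑ g with g i = true, ∑ k ∈ univ.erase i with g k = true, E k g :=
          sum_le_sum fun g hg => key g (by simpa using hg)
      _ ≤ ∑ g, ∑ k ∈ univ.erase i with g k = true, E k g :=
          sum_le_sum_of_subset_of_nonneg (filter_subset _ _) fun g _ _ =>
            sum_nonneg fun k _ => dirichletEnergy_nonneg _ _
      _ = ∑ k ∈ univ.erase i, ∑ g with g k = true, E k g := by
          simp only [sum_filter]
          exact sum_comm
      _ = 4 * ∑ j ∈ univ.erase i, gramDet n A j := by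
          simp only [mul_sum, four_mul_gramDet_eq_sum_dirichletEnergy, E, e]
  linarith

end GramDet

section Polytope

variable {n : ℕ}

def gramPolytope (n : ℕ) : Set (Fin n → ℝ) :=
  {d | (∀ i, 0 ≤ d i ∧ d i ≤ 1 / 4) ∧ ∀ i, d i ≤ ∑ j ∈ univ.erase i, d j}

lemma mem_gramPolytope_iff {d : Fin n → ℝ} :
    d ∈ gramPolytope n ↔ (∀ i, 0 ≤ d i ∧ d i ≤ 1 / 4) ∧ ∀ i, 2 * d i ≤ ∑ j, d j := by
  refine and_congr_right' (forall_congr' fun i => ?_)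
  rw [← add_sum_erase univ d (mem_univ i)]
  constructor <;> intro <;> linarith

lemma convex_gramPolytope : Convex ℝ (gramPolytope n) := by
  rintro x ⟨hx, hx'⟩ y ⟨hy, hy'⟩ a b ha hb hab
  refine ⟨fun i => ⟨?_, ?_⟩, fun i => ?_⟩ <;>
    simp only [Pi.add_apply, Pi.smul_apply, smul_eq_mul, sum_add_distrib, ← mul_sum]
  · nlinarith [hx i, hy i]
  · nlinarith [hx i, hy i]
  · nlinarith [hx' i, hy' i]

lemma gramDet_mem_gramPolytope {A : (Fin n → Bool) → ℝ} (hA : ∑ v, A v ^ 2 ≤ 1) :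
    gramDet n A ∈ gramPolytope n := by
  have hA₀ : 0 ≤ ∑ v, A v ^ 2 := sum_nonneg fun v _ => sq_nonneg (A v)
  refine ⟨fun k => ⟨gramDet_nonneg A k, (gramDet_le_sq_div_four A k).trans ?_⟩,
    gramDet_le_sum_erase A⟩
  nlinarith

noncomputable def gramVertex (S : Finset (Fin n)) : Fin n → ℝ :=
  fun k => if k ∈ S then 1 / 4 else 0

def gramVertices (n : ℕ) : Set (Fin n → ℝ) := gramVertex '' {S : Finset (Fin n) | #S ≠ 1}

lemma zero_mem_gramVertices : (0 : Fin n → ℝ) ∈ gramVertices n :=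
  ⟨∅, by simp, funext fun k => by simp [gramVertex]⟩

lemma sum_gramVertex (S : Finset (Fin n)) : ∑ k, gramVertex S k = #S / 4 := by
  simp [gramVertex, sum_ite_mem, div_eq_mul_inv]

noncomputable def ghzTensor (S : Finset (Fin n)) : (Fin n → Bool) → ℝ :=
  fun v => if v ∈ ({fun _ => false, fun j => decide (j ∈ S)} : Finset _) then √(1 / 2) else 0

lemma sum_sq_ghzTensor_le_one (S : Finset (Fin n)) : ∑ v, ghzTensor S v ^ 2 ≤ 1 := by
  have hcard : (#{(fun _ => false : Fin n → Bool), fun j => decide (j ∈ S)} : ℝ) ≤ 2 := by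
    exact_mod_cast card_le_two
  simp only [ghzTensor, ite_pow, ne_eq, OfNat.ofNat_ne_zero, not_false_eq_true, zero_pow,
    sum_ite_mem, univ_inter, sum_const, nsmul_eq_mul, Real.sq_sqrt (by norm_num : (0 : ℝ) ≤ 1 / 2)]
  linarith

lemma gramDet_ghzTensor {S : Finset (Fin n)} (hS : #S ≠ 1) (k : Fin n) :
    gramDet n (ghzTensor S) k = gramVertex S k := by
  have hslice : ∀ b r, ghzTensor S (iotaIdx n k b r) =
      if (b = false ∧ r = fun _ => false) ∨ (b = decide (k ∈ S) ∧ r = fun j => decide (j.1 ∈ S))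
      then √(1 / 2) else 0 := fun b r => by
    simp only [ghzTensor, mem_insert, mem_singleton, iotaIdx_eq_iff]
  by_cases hk : k ∈ S
  · have hr : (fun j => decide (j.1 ∈ S)) ≠ (fun _ => false : {j // j ≠ k} → Bool) := by
      obtain ⟨j, hjS, hjk⟩ := exists_mem_ne (s := S) (by have := card_pos.2 ⟨k, hk⟩; omega) k
      exact fun h => by simpa [hjS] using congrFun h ⟨j, hjk⟩
    norm_num [gramDet, hslice, hk, gramVertex, hr]
  · simp [gramDet, hslice, hk, gramVertex]

lemma gramVertices_subset_gramLocus :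
    gramVertices n ⊆ (fun A => gramDet n A) '' {A | ∑ v, A v ^ 2 ≤ 1} := by
  rintro _ ⟨S, hS, rfl⟩
  exact ⟨ghzTensor S, sum_sq_ghzTensor_le_one S, funext (gramDet_ghzTensor hS)⟩

lemma mem_convexHull_of_eq_sum_erase {d : Fin n → ℝ} (hd : ∀ i, 0 ≤ d i ∧ d i ≤ 1 / 4) {i₀ : Fin n}
    (htight : ∑ j ∈ univ.erase i₀, d j = d i₀) :
    d ∈ convexHull ℝ (gramVertices n) := by
  have hd_eq : d = ∑ j ∈ univ.erase i₀, (4 * d j) • gramVertex {i₀, j} := by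
    funext k
    simp only [Finset.sum_apply, Pi.smul_apply, smul_eq_mul, gramVertex, mem_insert, mem_singleton]
    by_cases hk : k = i₀
    · subst hk
      simp only [true_or, if_true]
      conv_lhs => rw [← htight]
      exact sum_congr rfl fun j _ => by ring
    · simp only [hk, false_or, mul_ite, mul_zero]
      rw [sum_ite_eq, if_pos (mem_erase.2 ⟨hk, mem_univ k⟩)]
      ring
  rw [hd_eq]
  refine (convex_convexHull ℝ _).sum_smul_mem_of_zero_mem
    (subset_convexHull ℝ _ zero_mem_gramVertices) (fun j _ => by linarith [hd j])
    (by rw [← mul_sum, htight]; linarith [hd i₀]) fun j hj =>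
      subset_convexHull ℝ _ (Set.mem_image_of_mem _ (by simp [card_pair (ne_of_mem_erase hj).symm]))

lemma inv_smul_sub_smul_gramVertex_mem {d : Fin n → ℝ} (hd : d ∈ gramPolytope n)
    {T : Finset (Fin n)} (hT : ∀ k ∉ T, d k = 0) {t : ℝ} (ht : t < 1)
    (hμ : ∀ k ∈ T, t ≤ 4 * d k) (hσ : ∀ i ∈ T, t * (#T - 2) ≤ 4 * (∑ j, d j - 2 * d i)) :
    (1 - t)⁻¹ • (d - t • gramVertex T) ∈ gramPolytope n := by
  obtain ⟨hb, -⟩ := mem_gramPolytope_iff.1 hd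
  have hc : 0 < (1 - t)⁻¹ := inv_pos.2 (by linarith)
  have hz₀ : ∀ k, 0 ≤ d k - t * gramVertex T k := fun k => by
    by_cases hk : k ∈ T
    · simp only [gramVertex, if_pos hk]; linarith [hμ k hk]
    · simp [gramVertex, hk, hT k hk]
  have hz₁ : ∀ k, d k - t * gramVertex T k ≤ (1 - t) / 4 := fun k => by
    by_cases hk : k ∈ T
    · simp only [gramVertex, if_pos hk]; linarith [hb k]
    · simp only [gramVertex, if_neg hk, hT k hk]; linarith
  have hz₂ : ∀ i, 2 * (d i - t * gramVertex T i) ≤ ∑ j, (d j - t * gramVertex T j) := fun i => by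
    by_cases hi : i ∈ T
    · rw [sum_sub_distrib, ← mul_sum, sum_gramVertex]
      simp only [gramVertex, if_pos hi]
      linarith [hσ i hi]
    · rw [show gramVertex T i = 0 from if_neg hi, hT i hi, mul_zero, sub_zero, mul_zero]
      exact sum_nonneg fun j _ => hz₀ j
  refine mem_gramPolytope_iff.2 ⟨fun k => ⟨?_, ?_⟩, fun i => ?_⟩ <;>
    simp only [Pi.smul_apply, Pi.sub_apply, smul_eq_mul, ← mul_sum]
  · exact mul_nonneg hc.le (hz₀ k)
  · rw [inv_mul_le_iff₀ (by linarith)]; linarith [hz₁ k]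
  · rw [mul_left_comm]; exact mul_le_mul_of_nonneg_left (hz₂ i) hc.le

lemma mem_convexHull_of_slack_lt {d : Fin n → ℝ} (hd : d ∈ gramPolytope n) {T : Finset (Fin n)}
    (hT : ∀ k ∉ T, d k = 0) {i₀ : Fin n} (hi₀ : i₀ ∈ T) (hmax : ∀ k ∈ T, d k ≤ d i₀)
    (hslack : ∀ k ∈ T, ∑ j, d j - 2 * d i₀ < d k * (#T - 2)) :
    d ∈ convexHull ℝ (gramVertices n) := by
  obtain ⟨hb, hp⟩ := mem_gramPolytope_iff.1 hd
  have hT2 : (2 : ℝ) < #T := by nlinarith [hslack i₀ hi₀, hp i₀, hb i₀]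
  -- the largest `t` for which the peeled point still satisfies the polygon inequality at `i₀`
  set t := 4 * (∑ j, d j - 2 * d i₀) / (#T - 2)
  have ht : t * (#T - 2) = 4 * (∑ j, d j - 2 * d i₀) := div_mul_cancel₀ _ (by linarith)
  have htk : ∀ k ∈ T, t < 4 * d k := fun k hk => by nlinarith [hslack k hk]
  have hy := inv_smul_sub_smul_gramVertex_mem hd hT (t := t) (by linarith [htk i₀ hi₀, hb i₀])
    (fun k hk => (htk k hk).le) fun i hi => by linarith [hmax i hi]
  have hsum_y : ∑ j, ((1 - t)⁻¹ • (d - t • gramVertex T)) j =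
      2 * ((1 - t)⁻¹ • (d - t • gramVertex T)) i₀ := by
    simp only [Pi.smul_apply, Pi.sub_apply, smul_eq_mul, ← mul_sum, sum_sub_distrib,
      sum_gramVertex]
    rw [show gramVertex T i₀ = 1 / 4 from if_pos hi₀, mul_left_comm]
    congr 1
    linarith
  refine (convex_convexHull ℝ _).mem_of_inv_smul_sub_smul_mem
    (subset_convexHull ℝ _ (Set.mem_image_of_mem _ ?_)) (t := t) ?_
    (by linarith [htk i₀ hi₀, hb i₀])
    (mem_convexHull_of_eq_sum_erase (mem_gramPolytope_iff.1 hy).1 (i₀ := i₀) ?_)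
  · exact fun h => by rw [h] at hT2; norm_num at hT2
  · exact div_nonneg (by linarith [hp i₀]) (by linarith)
  · linarith [add_sum_erase univ ((1 - t)⁻¹ • (d - t • gramVertex T)) (mem_univ i₀)]

lemma card_ne_one_of_mem_gramPolytope {d : Fin n → ℝ} (hd : d ∈ gramPolytope n)
    {T : Finset (Fin n)} (hT : ∀ k ∉ T, d k = 0) {i : Fin n} (hi : i ∈ T) (hdi : d i ≠ 0) :
    #T ≠ 1 := fun h => by
  obtain ⟨a, rfl⟩ := card_eq_one.1 h
  rw [mem_singleton] at hi
  subst hi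
  have := (mem_gramPolytope_iff.1 hd).2 i
  rw [Fintype.sum_eq_single i fun k hk => hT k (by simpa using hk)] at this
  exact hdi (le_antisymm (by linarith) ((mem_gramPolytope_iff.1 hd).1 i).1)

lemma eq_gramVertex {d : Fin n → ℝ} {T : Finset (Fin n)} (hT : ∀ k ∉ T, d k = 0)
    (hT' : ∀ k ∈ T, d k = 1 / 4) : d = gramVertex T :=
  funext fun k => by
    by_cases hk : k ∈ T
    · rw [hT' k hk, gramVertex, if_pos hk]
    · rw [hT k hk, gramVertex, if_neg hk]

lemma inv_smul_sub_smul_gramVertex_eq_zero {d : Fin n → ℝ} {T : Finset (Fin n)}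
    (hT : ∀ k ∉ T, d k = 0) {j : Fin n} (hj : j ∈ T) {k : Fin n} (hk : k ∉ T.erase j) :
    ((1 - 4 * d j)⁻¹ • (d - (4 * d j) • gramVertex T)) k = 0 := by
  simp only [Pi.smul_apply, Pi.sub_apply, smul_eq_mul, gramVertex]
  by_cases hkj : k = j
  · rw [hkj, if_pos hj]
    ring
  · have hkT : k ∉ T := fun h => hk (mem_erase.2 ⟨hkj, h⟩)
    rw [hT k hkT, if_neg hkT]
    ring

lemma mem_convexHull_of_forall_notMem_eq_zero (T : Finset (Fin n)) {d : Fin n → ℝ}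
    (hd : d ∈ gramPolytope n) (hT : ∀ k ∉ T, d k = 0) :
    d ∈ convexHull ℝ (gramVertices n) := by
  induction T using Finset.strongInduction generalizing d with | H T ih => ?_
  by_cases hzero : ∃ j ∈ T, d j = 0
  · obtain ⟨j, hj, hdj⟩ := hzero
    refine ih _ (erase_ssubset hj) hd fun k hk => ?_
    by_cases hkj : k = j
    · rwa [hkj]
    · exact hT k fun h => hk (mem_erase.2 ⟨hkj, h⟩)
  push Not at hzero
  rcases T.eq_empty_or_nonempty with rfl | hTne
  · rw [show d = 0 from funext fun k => hT k (notMem_empty k)]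
    exact subset_convexHull ℝ _ zero_mem_gramVertices
  obtain ⟨hb, hp⟩ := mem_gramPolytope_iff.1 hd
  obtain ⟨i₀, hi₀, hmax⟩ := exists_max_image T d hTne
  obtain ⟨j₁, hj₁, hmin⟩ := exists_min_image T d hTne
  by_cases hslack : ∑ j, d j - 2 * d i₀ < d j₁ * (#T - 2)
  · exact mem_convexHull_of_slack_lt hd hT hi₀ hmax fun k hk =>
      hslack.trans_le (mul_le_mul_of_nonneg_right (hmin k hk) (by nlinarith [hb j₁, hp i₀]))
  push Not at hslack
  have hvert : gramVertex T ∈ convexHull ℝ (gramVertices n) := subset_convexHull ℝ _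
    (Set.mem_image_of_mem _ (card_ne_one_of_mem_gramPolytope hd hT hi₀ (hzero i₀ hi₀)))
  rcases (hb j₁).2.eq_or_lt with hfull | hlt
  · rwa [eq_gramVertex hT fun k hk => le_antisymm (hb k).2 (hfull ▸ hmin k hk)]
  have hy := inv_smul_sub_smul_gramVertex_mem hd hT (t := 4 * d j₁) (by linarith)
    (fun k hk => by linarith [hmin k hk]) fun i hi => by linarith [hmax i hi]
  exact (convex_convexHull ℝ _).mem_of_inv_smul_sub_smul_mem hvert (by linarith [hb j₁])
    (by linarith) (ih _ (erase_ssubset hj₁) hy fun _ hk =>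
      inv_smul_sub_smul_gramVertex_eq_zero hT hj₁ hk)

end Polytope

theorem convexHull_gramLocus_general (n : ℕ) :
    convexHull ℝ
        ((fun A : (Fin n → Bool) → ℝ => fun k : Fin n => gramDet n A k) ''
          {A : (Fin n → Bool) → ℝ | ∑ v : Fin n → Bool, (A v) ^ 2 ≤ 1}) =
      {d : Fin n → ℝ |
        (∀ i : Fin n, 0 ≤ d i ∧ d i ≤ 1 / 4) ∧
        ∀ i : Fin n, d i ≤ ∑ j ∈ Finset.univ.erase i, d j} := by
  refine (convexHull_min ?_ convex_gramPolytope).antisymm fun d hd => ?_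
  · rintro _ ⟨A, hA, rfl⟩
    exact gramDet_mem_gramPolytope hA
  · exact convexHull_mono gramVertices_subset_gramLocus
      (mem_convexHull_of_forall_notMem_eq_zero univ hd fun k hk => absurd (mem_univ k) hk)

/-- The convex hull of the Gram locus is the polytope cut out by
`0 ≤ d_i ≤ 1/4` and `d_i ≤ Σ_{j ≠ i} d_j`. -/
theorem convexHull_gramLocus (n : ℕ) (hn : 2 ≤ n) :
    convexHull ℝ
        ((fun A : (Fin n → Bool) → ℝ => fun k : Fin n => gramDet n A k) ''
          {A : (Fin n → Bool) → ℝ | ∑ v : Fin n → Bool, (A v) ^ 2 ≤ 1}) =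
      {d : Fin n → ℝ |
        (∀ i : Fin n, 0 ≤ d i ∧ d i ≤ 1 / 4) ∧
        ∀ i : Fin n, d i ≤ ∑ j ∈ Finset.univ.erase i, d j} :=
  convexHull_gramLocus_general n
end

section
/- Let n ≥ 2 and let P = {(d₁,…,d_n) ∈ ℝ^n : 0 ≤ d_i ≤ 1/4 for all i, and d_i ≤ Σ_{j≠i} d_j for all i}. Then the set of extreme points of P is exactly the origin (0,…,0) together with all points having, for some i with 2 ≤ i ≤ n, exactly i coordinates equal to 1/4 and the remaining n−i coordinates equal to 0. In particular, P has exactly 2^n − n extreme points. -/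
open Finset


private lemma sum_two_ite {n : ℕ} (i j : Fin n) (hij : i ≠ j) (a b : ℝ) :
    ∑ l, (if l = i then a else if l = j then b else 0) = a + b := by
  have : (fun l : Fin n => if l = i then a else if l = j then b else 0)
      = fun l => (if l = i then a else 0) + (if l = j then b else 0) := by
    funext l
    by_cases h1 : l = i
    · subst h1; simp [hij]
    · by_cases h2 : l = j <;> simp [h1, h2, Ne.symm hij]
  rw [this, Finset.sum_add_distrib, Finset.sum_ite_eq', Finset.sum_ite_eq']
  simp

/-- case: `j` is sum-tight, both `i,j` interior: perturb both up/down together. -/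
private lemma perturbB {n : ℕ} (d : Fin n → ℝ)
    (hbox : ∀ i, 0 ≤ d i ∧ d i ≤ 1 / 4)
    (hsum : ∀ i, 2 * d i ≤ ∑ j, d j)
    (i j : Fin n) (hij : i ≠ j)
    (hi1 : 0 < d i) (hi2 : d i < 1 / 4) (hj1 : 0 < d j) (hj2 : d j < 1 / 4)
    (ht : 2 * d j = ∑ k, d k) :
    ∃ v : Fin n → ℝ, v ≠ 0 ∧
      ((∀ l, 0 ≤ d l + v l ∧ d l + v l ≤ 1 / 4) ∧ ∀ l, 2 * (d l + v l) ≤ ∑ k, (d k + v k)) ∧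
      ((∀ l, 0 ≤ d l - v l ∧ d l - v l ≤ 1 / 4) ∧ ∀ l, 2 * (d l - v l) ≤ ∑ k, (d k - v k)) := by
  set s := ∑ k, d k with hs
  set ε : ℝ := min (min (d i) (1 / 4 - d i)) (min (d j) (1 / 4 - d j)) with hε
  have hε0 : 0 < ε := by
    simp only [hε, lt_min_iff]
    exact ⟨⟨hi1, by linarith⟩, hj1, by linarith⟩
  have hεi1 : ε ≤ d i := le_trans (min_le_left _ _) (min_le_left _ _)
  have hεi2 : ε ≤ 1 / 4 - d i := le_trans (min_le_left _ _) (min_le_right _ _)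
  have hεj1 : ε ≤ d j := le_trans (min_le_right _ _) (min_le_left _ _)
  have hεj2 : ε ≤ 1 / 4 - d j := le_trans (min_le_right _ _) (min_le_right _ _)
  refine ⟨fun l => if l = i then ε else if l = j then ε else 0, ?_, ⟨?_, ?_⟩, ?_, ?_⟩
  · intro h
    have := congrFun h i
    simp at this
    exact absurd this (ne_of_gt hε0)
  · intro l
    by_cases h1 : l = i
    · simp [h1, hij]; constructor <;> linarith
    · by_cases h2 : l = j <;> simp [h1, h2, Ne.symm hij] <;>
        constructor <;> linarith [(hbox l).1, (hbox l).2]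
  · intro l
    rw [Finset.sum_add_distrib, sum_two_ite i j hij, ← hs]
    by_cases h1 : l = i
    · simp [h1, hij]; have := hsum i; linarith
    · by_cases h2 : l = j
      · simp [h1, h2, Ne.symm hij]; linarith
      · simp [h1, h2]; have := hsum l; linarith
  · intro l
    by_cases h1 : l = i
    · simp [h1, hij]; constructor <;> linarith
    · by_cases h2 : l = j <;> simp [h1, h2, Ne.symm hij] <;>
        constructor <;> linarith [(hbox l).1, (hbox l).2]
  · intro l
    rw [Finset.sum_sub_distrib, sum_two_ite i j hij, ← hs]
    by_cases h1 : l = i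
    · simp [h1, hij]; have := hsum i; linarith
    · by_cases h2 : l = j
      · simp [h1, h2, Ne.symm hij]; linarith
      · simp [h1, h2]
        have hil : i ≠ l := fun h => h1 h.symm
        have hsub : ({i, l} : Finset (Fin n)) ⊆ Finset.univ.erase j := by
          intro m hm
          rcases Finset.mem_insert.1 hm with rfl | hm
          · exact Finset.mem_erase.2 ⟨hij, Finset.mem_univ _⟩
          · rw [Finset.mem_singleton] at hm; subst hm
            exact Finset.mem_erase.2 ⟨h2, Finset.mem_univ _⟩
        have hle := Finset.sum_le_sum_of_subset_of_nonneg hsub (fun m _ _ => (hbox m).1)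
        rw [Finset.sum_pair hil, Finset.sum_erase_eq_sub (Finset.mem_univ j), ← hs] at hle
        linarith

/-- case: both `i,j` interior and sum-slack: transfer mass between them. -/
private lemma perturbA {n : ℕ} (d : Fin n → ℝ)
    (hbox : ∀ i, 0 ≤ d i ∧ d i ≤ 1 / 4)
    (hsum : ∀ i, 2 * d i ≤ ∑ j, d j)
    (i j : Fin n) (hij : i ≠ j)
    (hi1 : 0 < d i) (hi2 : d i < 1 / 4) (hj1 : 0 < d j) (hj2 : d j < 1 / 4)
    (hti : 2 * d i < ∑ k, d k) (htj : 2 * d j < ∑ k, d k) :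
    ∃ v : Fin n → ℝ, v ≠ 0 ∧
      ((∀ l, 0 ≤ d l + v l ∧ d l + v l ≤ 1 / 4) ∧ ∀ l, 2 * (d l + v l) ≤ ∑ k, (d k + v k)) ∧
      ((∀ l, 0 ≤ d l - v l ∧ d l - v l ≤ 1 / 4) ∧ ∀ l, 2 * (d l - v l) ≤ ∑ k, (d k - v k)) := by
  set s := ∑ k, d k with hs
  set ε : ℝ := min (min (min (d i) (1 / 4 - d i)) (min (d j) (1 / 4 - d j)))
      (min ((s - 2 * d i) / 2) ((s - 2 * d j) / 2)) with hε
  have hε0 : 0 < ε := by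
    simp only [hε, lt_min_iff]
    refine ⟨⟨⟨hi1, by linarith⟩, hj1, by linarith⟩, by linarith, by linarith⟩
  have hεi1 : ε ≤ d i := le_trans (min_le_left _ _) (le_trans (min_le_left _ _) (min_le_left _ _))
  have hεi2 : ε ≤ 1 / 4 - d i :=
    le_trans (min_le_left _ _) (le_trans (min_le_left _ _) (min_le_right _ _))
  have hεj1 : ε ≤ d j := le_trans (min_le_left _ _) (le_trans (min_le_right _ _) (min_le_left _ _))
  have hεj2 : ε ≤ 1 / 4 - d j :=
    le_trans (min_le_left _ _) (le_trans (min_le_right _ _) (min_le_right _ _))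
  have hεsi : ε ≤ (s - 2 * d i) / 2 := le_trans (min_le_right _ _) (min_le_left _ _)
  have hεsj : ε ≤ (s - 2 * d j) / 2 := le_trans (min_le_right _ _) (min_le_right _ _)
  refine ⟨fun l => if l = i then ε else if l = j then -ε else 0, ?_, ⟨?_, ?_⟩, ?_, ?_⟩
  · intro h
    have := congrFun h i
    simp at this
    exact absurd this (ne_of_gt hε0)
  · intro l
    by_cases h1 : l = i
    · simp [h1, hij]; constructor <;> linarith
    · by_cases h2 : l = j <;> simp [h1, h2, Ne.symm hij] <;>
        constructor <;> linarith [(hbox l).1, (hbox l).2]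
  · intro l
    rw [Finset.sum_add_distrib, sum_two_ite i j hij, ← hs]
    by_cases h1 : l = i
    · simp [h1, hij]; linarith
    · by_cases h2 : l = j
      · simp [h1, h2, Ne.symm hij]; linarith
      · simp [h1, h2]; have := hsum l; linarith
  · intro l
    by_cases h1 : l = i
    · simp [h1, hij]; constructor <;> linarith
    · by_cases h2 : l = j <;> simp [h1, h2, Ne.symm hij] <;>
        constructor <;> linarith [(hbox l).1, (hbox l).2]
  · intro l
    rw [Finset.sum_sub_distrib, sum_two_ite i j hij, ← hs]
    by_cases h1 : l = i
    · simp [h1, hij]; linarith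
    · by_cases h2 : l = j
      · simp [h1, h2, Ne.symm hij]; linarith
      · simp [h1, h2]; have := hsum l; linarith

/-- case: `i` is the only interior coordinate; move only `i`. -/
private lemma perturbC {n : ℕ} (d : Fin n → ℝ)
    (hbox : ∀ i, 0 ≤ d i ∧ d i ≤ 1 / 4)
    (hsum : ∀ i, 2 * d i ≤ ∑ j, d j)
    (i : Fin n) (hi1 : 0 < d i) (hi2 : d i < 1 / 4)
    (hoth : ∀ l, l ≠ i → d l = 0 ∨ d l = 1 / 4) :
    ∃ v : Fin n → ℝ, v ≠ 0 ∧
      ((∀ l, 0 ≤ d l + v l ∧ d l + v l ≤ 1 / 4) ∧ ∀ l, 2 * (d l + v l) ≤ ∑ k, (d k + v k)) ∧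
      ((∀ l, 0 ≤ d l - v l ∧ d l - v l ≤ 1 / 4) ∧ ∀ l, 2 * (d l - v l) ≤ ∑ k, (d k - v k)) := by
  set s := ∑ k, d k with hs
  -- there is some other coordinate equal to 1/4
  have hex : ∃ l, l ≠ i ∧ d l = 1 / 4 := by
    by_contra h
    push_neg at h
    have hz : ∀ l ∈ Finset.univ.erase i, d l = 0 := by
      intro l hl
      have hli := (Finset.mem_erase.1 hl).1
      rcases hoth l hli with h0 | h4
      · exact h0
      · exact absurd h4 (h l hli)
    have : s = d i := by
      rw [hs, ← Finset.add_sum_erase _ _ (Finset.mem_univ i), Finset.sum_eq_zero hz, add_zero]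
    have := hsum i
    linarith
  obtain ⟨l₀, hl₀i, hl₀⟩ := hex
  -- sum is strictly greater than 1/2
  have hs2 : 1 / 2 ≤ s := by have := hsum l₀; rw [hl₀] at this; linarith
  have hsgt : 1 / 2 < s := by
    rcases lt_or_eq_of_le hs2 with h | h
    · exact h
    -- s = 1/2 leads to contradiction
    exfalso
    by_cases hm : ∃ m, m ≠ i ∧ m ≠ l₀ ∧ d m = 1 / 4
    · obtain ⟨m, hmi, hml, hm4⟩ := hm
      have hsub : ({l₀, m} : Finset (Fin n)) ⊆ Finset.univ.erase i := by
        intro a ha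
        rcases Finset.mem_insert.1 ha with rfl | ha
        · exact Finset.mem_erase.2 ⟨hl₀i, Finset.mem_univ _⟩
        · rw [Finset.mem_singleton] at ha; subst ha
          exact Finset.mem_erase.2 ⟨hmi, Finset.mem_univ _⟩
      have hle := Finset.sum_le_sum_of_subset_of_nonneg hsub (fun a _ _ => (hbox a).1)
      rw [Finset.sum_pair (fun h => hml h.symm), Finset.sum_erase_eq_sub (Finset.mem_univ i),
        ← hs] at hle
      rw [hl₀, hm4] at hle
      linarith
    · push_neg at hm
      have hz : ∀ a ∈ (Finset.univ.erase i).erase l₀, d a = 0 := by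
        intro a ha
        have h1 := (Finset.mem_erase.1 ha).1
        have h2 := (Finset.mem_erase.1 (Finset.mem_erase.1 ha).2).1
        rcases hoth a h2 with h0 | h4
        · exact h0
        · exact absurd h4 (hm a h2 h1)
      have hsum_erase : ∑ a ∈ Finset.univ.erase i, d a = 1 / 4 := by
        rw [← Finset.add_sum_erase _ _ (Finset.mem_erase.2 ⟨hl₀i, Finset.mem_univ _⟩),
          Finset.sum_eq_zero hz, add_zero, hl₀]
      have : s = d i + 1 / 4 := by
        rw [hs, ← Finset.add_sum_erase _ _ (Finset.mem_univ i), hsum_erase]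
      rw [← h] at this
      linarith
  -- strict slack at i
  have hslacki : 2 * d i < s := by
    rcases lt_or_eq_of_le (hsum i) with h | h
    · exact h
    exfalso
    have hge : d l₀ ≤ ∑ a ∈ Finset.univ.erase i, d a :=
      Finset.single_le_sum (fun a _ => (hbox a).1)
        (Finset.mem_erase.2 ⟨hl₀i, Finset.mem_univ _⟩)
    rw [Finset.sum_erase_eq_sub (Finset.mem_univ i), ← hs, hl₀] at hge
    linarith
  set ε : ℝ := min (min (d i) (1 / 4 - d i)) (min (s - 2 * d i) (s - 1 / 2)) with hε
  have hε0 : 0 < ε := by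
    simp only [hε, lt_min_iff]
    exact ⟨⟨hi1, by linarith⟩, by linarith, by linarith⟩
  have hεi1 : ε ≤ d i := le_trans (min_le_left _ _) (min_le_left _ _)
  have hεi2 : ε ≤ 1 / 4 - d i := le_trans (min_le_left _ _) (min_le_right _ _)
  have hεs1 : ε ≤ s - 2 * d i := le_trans (min_le_right _ _) (min_le_left _ _)
  have hεs2 : ε ≤ s - 1 / 2 := le_trans (min_le_right _ _) (min_le_right _ _)
  refine ⟨fun l => if l = i then ε else 0, ?_, ⟨?_, ?_⟩, ?_, ?_⟩
  · intro h
    have := congrFun h i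
    simp at this
    exact absurd this (ne_of_gt hε0)
  · intro l
    by_cases h1 : l = i
    · simp [h1]; constructor <;> linarith
    · simp [h1]; constructor <;> linarith [(hbox l).1, (hbox l).2]
  · intro l
    rw [Finset.sum_add_distrib, Finset.sum_ite_eq', if_pos (Finset.mem_univ i), ← hs]
    by_cases h1 : l = i
    · simp [h1]; linarith
    · simp [h1]; have := hsum l; linarith
  · intro l
    by_cases h1 : l = i
    · simp [h1]; constructor <;> linarith
    · simp [h1]; constructor <;> linarith [(hbox l).1, (hbox l).2]
  · intro l
    rw [Finset.sum_sub_distrib, Finset.sum_ite_eq', if_pos (Finset.mem_univ i), ← hs]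
    by_cases h1 : l = i
    · simp [h1]; linarith
    · simp [h1]
      rcases hoth l h1 with h0 | h4
      · rw [h0]; linarith
      · rw [h4]; linarith


private lemma memP_iff {n : ℕ} (d : Fin n → ℝ) :
    d ∈ {d : Fin n → ℝ |
          (∀ i : Fin n, 0 ≤ d i ∧ d i ≤ 1 / 4) ∧
          ∀ i : Fin n, d i ≤ ∑ j ∈ Finset.univ.erase i, d j} ↔
      (∀ i, 0 ≤ d i ∧ d i ≤ 1 / 4) ∧ ∀ i, 2 * d i ≤ ∑ j, d j := by
  simp only [Set.mem_setOf_eq]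
  constructor <;> rintro ⟨h1, h2⟩ <;> refine ⟨h1, fun i => ?_⟩ <;> have h := h2 i
  · rw [Finset.sum_erase_eq_sub (Finset.mem_univ i)] at h; linarith
  · rw [Finset.sum_erase_eq_sub (Finset.mem_univ i)]; linarith

private lemma vertex_extreme {n : ℕ} (d : Fin n → ℝ)
    (hd : d ∈ {d : Fin n → ℝ |
          (∀ i : Fin n, 0 ≤ d i ∧ d i ≤ 1 / 4) ∧
          ∀ i : Fin n, d i ≤ ∑ j ∈ Finset.univ.erase i, d j})
    (hk : ∀ i, d i = 0 ∨ d i = 1 / 4) :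
    d ∈ Set.extremePoints ℝ {d : Fin n → ℝ |
          (∀ i : Fin n, 0 ≤ d i ∧ d i ≤ 1 / 4) ∧
          ∀ i : Fin n, d i ≤ ∑ j ∈ Finset.univ.erase i, d j} := by
  rw [mem_extremePoints]
  refine ⟨hd, fun x hx y hy hseg => ?_⟩
  obtain ⟨a, b, ha, hb, hab, heq⟩ := hseg
  have hco : ∀ i, x i = d i ∧ y i = d i := by
    intro i
    have he : a * x i + b * y i = d i := by
      have := congrFun heq i
      simpa using this
    rcases hk i with h0 | h4
    · rw [h0] at he ⊢
      have h1 : 0 ≤ a * x i := mul_nonneg ha.le (hx.1 i).1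
      have h2 : 0 ≤ b * y i := mul_nonneg hb.le (hy.1 i).1
      have hax : a * x i = 0 := by linarith
      have hby : b * y i = 0 := by linarith
      exact ⟨(mul_eq_zero.1 hax).resolve_left ha.ne',
        (mul_eq_zero.1 hby).resolve_left hb.ne'⟩
    · rw [h4] at he ⊢
      have h1 : 0 ≤ a * (1 / 4 - x i) := mul_nonneg ha.le (by linarith [(hx.1 i).2])
      have h2 : 0 ≤ b * (1 / 4 - y i) := mul_nonneg hb.le (by linarith [(hy.1 i).2])
      have h3 : a * (1 / 4 - x i) + b * (1 / 4 - y i) = 0 := by linear_combination hab / 4 - he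
      have hax : a * (1 / 4 - x i) = 0 := by linarith
      have hby : b * (1 / 4 - y i) = 0 := by linarith
      constructor
      · have := (mul_eq_zero.1 hax).resolve_left ha.ne'; linarith
      · have := (mul_eq_zero.1 hby).resolve_left hb.ne'; linarith
  exact ⟨funext fun i => (hco i).1, funext fun i => (hco i).2⟩

private lemma indicator_memP {n : ℕ} (S : Finset (Fin n)) (hS : 2 ≤ S.card) :
    (fun i => if i ∈ S then (1 / 4 : ℝ) else 0) ∈ {d : Fin n → ℝ |
          (∀ i : Fin n, 0 ≤ d i ∧ d i ≤ 1 / 4) ∧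
          ∀ i : Fin n, d i ≤ ∑ j ∈ Finset.univ.erase i, d j} := by
  constructor
  · intro i
    by_cases h : i ∈ S <;> simp [h]
  · intro i
    have hinter : (Finset.univ.erase i) ∩ S = S.erase i := by
      ext a
      simp [and_comm]
    rw [Finset.sum_ite_mem, hinter, Finset.sum_const, nsmul_eq_mul]
    by_cases hi : i ∈ S
    · simp only [hi, if_true, Finset.card_erase_of_mem hi]
      have h1 : 1 ≤ S.card - 1 := by omega
      have h2 : (1 : ℝ) ≤ ((S.card - 1 : ℕ) : ℝ) := by exact_mod_cast h1
      linarith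
    · simp only [hi, if_false]
      positivity

private lemma card_part {n : ℕ} :
    ({d : Fin n → ℝ |
        d = 0 ∨ ∃ S : Finset (Fin n), 2 ≤ S.card ∧
          d = fun i => if i ∈ S then (1 / 4 : ℝ) else 0} : Set (Fin n → ℝ)).ncard =
      2 ^ n - n := by
  classical
  have hinj : Function.Injective
      (fun S : Finset (Fin n) => fun i => if i ∈ S then (1 / 4 : ℝ) else 0) := by
    intro S T h
    ext a
    have := congrFun h a
    constructor <;> intro hm <;> by_contra hm' <;> simp [hm, hm'] at this
  have himg : {d : Fin n → ℝ |
        d = 0 ∨ ∃ S : Finset (Fin n), 2 ≤ S.card ∧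
          d = fun i => if i ∈ S then (1 / 4 : ℝ) else 0}
      = (fun S : Finset (Fin n) => fun i => if i ∈ S then (1 / 4 : ℝ) else 0) ''
        {S : Finset (Fin n) | S.card ≠ 1} := by
    ext d
    simp only [Set.mem_setOf_eq, Set.mem_image]
    constructor
    · rintro (rfl | ⟨S, hS, rfl⟩)
      · exact ⟨∅, by simp, by funext i; simp⟩
      · exact ⟨S, by omega, rfl⟩
    · rintro ⟨S, hS, rfl⟩
      rcases Nat.eq_zero_or_pos S.card with h0 | hpos
      · left
        rw [Finset.card_eq_zero] at h0
        subst h0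
        funext i
        simp
      · right; exact ⟨S, by omega, rfl⟩
  rw [himg, Set.ncard_image_of_injective _ hinj]
  have hset : {S : Finset (Fin n) | S.card ≠ 1}
      = ↑(Finset.univ.filter fun S : Finset (Fin n) => ¬S.card = 1) := by
    ext S; simp
  rw [hset, Set.ncard_coe_finset]
  have h1 : (Finset.univ.filter fun S : Finset (Fin n) => S.card = 1).card = n := by
    have he : (Finset.univ.filter fun S : Finset (Fin n) => S.card = 1)
        = Finset.univ.image (fun a : Fin n => ({a} : Finset (Fin n))) := by
      ext S
      simp [Finset.card_eq_one, eq_comm]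
    rw [he, Finset.card_image_of_injective _ Finset.singleton_injective,
      Finset.card_univ, Fintype.card_fin]
  have h2 := Finset.card_filter_add_card_filter_not
    (s := (Finset.univ : Finset (Finset (Fin n)))) (fun S => S.card = 1)
  have h3 : (Finset.univ : Finset (Finset (Fin n))).card = 2 ^ n := by
    rw [Finset.card_univ, Fintype.card_finset, Fintype.card_fin]
  omega

private lemma forwardE {n : ℕ} (d : Fin n → ℝ)
    (hd : d ∈ Set.extremePoints ℝ {d : Fin n → ℝ |
          (∀ i : Fin n, 0 ≤ d i ∧ d i ≤ 1 / 4) ∧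
          ∀ i : Fin n, d i ≤ ∑ j ∈ Finset.univ.erase i, d j}) :
    d = 0 ∨ ∃ S : Finset (Fin n), 2 ≤ S.card ∧
      d = fun i => if i ∈ S then (1 / 4 : ℝ) else 0 := by
  classical
  rw [mem_extremePoints] at hd
  obtain ⟨hdP, hext⟩ := hd
  obtain ⟨hbox, hsum⟩ := (memP_iff d).1 hdP
  have key : ∀ i, d i = 0 ∨ d i = 1 / 4 := by
    by_contra hc
    push_neg at hc
    obtain ⟨i, hi0, hi4⟩ := hc
    have hi1 : 0 < d i := lt_of_le_of_ne (hbox i).1 (Ne.symm hi0)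
    have hi2 : d i < 1 / 4 := lt_of_le_of_ne (hbox i).2 hi4
    obtain ⟨v, hv0, hvp, hvm⟩ :
        ∃ v : Fin n → ℝ, v ≠ 0 ∧
          ((∀ l, 0 ≤ d l + v l ∧ d l + v l ≤ 1 / 4) ∧
            ∀ l, 2 * (d l + v l) ≤ ∑ k, (d k + v k)) ∧
          ((∀ l, 0 ≤ d l - v l ∧ d l - v l ≤ 1 / 4) ∧
            ∀ l, 2 * (d l - v l) ≤ ∑ k, (d k - v k)) := by
      by_cases hj : ∃ j, j ≠ i ∧ 0 < d j ∧ d j < 1 / 4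
      · obtain ⟨j, hji, hj1, hj2⟩ := hj
        by_cases htj : 2 * d j = ∑ k, d k
        · exact perturbB d hbox hsum i j (Ne.symm hji) hi1 hi2 hj1 hj2 htj
        · by_cases hti : 2 * d i = ∑ k, d k
          · exact perturbB d hbox hsum j i hji hj1 hj2 hi1 hi2 hti
          · exact perturbA d hbox hsum i j (Ne.symm hji) hi1 hi2 hj1 hj2
              (lt_of_le_of_ne (hsum i) hti) (lt_of_le_of_ne (hsum j) htj)
      · push_neg at hj
        apply perturbC d hbox hsum i hi1 hi2
        intro l hl
        rcases eq_or_lt_of_le (hbox l).1 with h0 | hpos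
        · exact Or.inl h0.symm
        · exact Or.inr (le_antisymm (hbox l).2 (hj l hl hpos))
    have h1 : d + v ∈ {d : Fin n → ℝ |
          (∀ i : Fin n, 0 ≤ d i ∧ d i ≤ 1 / 4) ∧
          ∀ i : Fin n, d i ≤ ∑ j ∈ Finset.univ.erase i, d j} := (memP_iff _).2 hvp
    have h2 : d - v ∈ {d : Fin n → ℝ |
          (∀ i : Fin n, 0 ≤ d i ∧ d i ≤ 1 / 4) ∧
          ∀ i : Fin n, d i ≤ ∑ j ∈ Finset.univ.erase i, d j} := (memP_iff _).2 hvm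
    have hseg : d ∈ openSegment ℝ (d + v) (d - v) := by
      refine ⟨1 / 2, 1 / 2, by norm_num, by norm_num, by norm_num, ?_⟩
      funext l
      simp only [Pi.add_apply, Pi.sub_apply, Pi.smul_apply, smul_eq_mul]
      ring
    have := (hext _ h1 _ h2 hseg).1
    exact hv0 (by simpa using congrArg (fun w => w - d) this)
  set S := Finset.univ.filter (fun i => d i = 1 / 4) with hS
  have hdS : d = fun i => if i ∈ S then (1 / 4 : ℝ) else 0 := by
    funext i
    by_cases h : d i = 1 / 4
    · simp [hS, h]
    · rcases key i with h0 | h4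
      · simp [hS, h, h0]
      · exact absurd h4 h
  rcases Finset.eq_empty_or_nonempty S with hemp | ⟨l, hl⟩
  · left
    rw [hdS, hemp]
    funext i
    simp
  · right
    refine ⟨S, ?_, hdS⟩
    have hl4 : d l = 1 / 4 := (Finset.mem_filter.1 hl).2
    have hsl := hsum l
    have hsum_val : ∑ k, d k = (S.card : ℝ) * (1 / 4) := by
      rw [Finset.sum_congr rfl (fun k _ => by rw [hdS]), Finset.sum_ite_mem,
        Finset.univ_inter, Finset.sum_const, nsmul_eq_mul]
    rw [hl4, hsum_val] at hsl
    have : (2 : ℝ) ≤ (S.card : ℝ) := by linarith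
    exact_mod_cast this


/-- The set of extreme points of the polytope
`P = {d ∈ ℝⁿ : 0 ≤ dᵢ ≤ 1/4, dᵢ ≤ Σ_{j≠i} dⱼ}` is exactly the origin together with the
points having exactly `i` coordinates equal to `1/4` (for some `2 ≤ i ≤ n`) and the rest `0`;
in particular there are exactly `2^n - n` extreme points. -/
theorem extremePoints_gram_polytope (n : ℕ) (hn : 2 ≤ n) :
    Set.extremePoints ℝ
        {d : Fin n → ℝ |
          (∀ i : Fin n, 0 ≤ d i ∧ d i ≤ 1 / 4) ∧
          ∀ i : Fin n, d i ≤ ∑ j ∈ Finset.univ.erase i, d j} =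
      {d : Fin n → ℝ |
        d = 0 ∨ ∃ S : Finset (Fin n), 2 ≤ S.card ∧
          d = fun i => if i ∈ S then (1 / 4 : ℝ) else 0} ∧
    ({d : Fin n → ℝ |
        d = 0 ∨ ∃ S : Finset (Fin n), 2 ≤ S.card ∧
          d = fun i => if i ∈ S then (1 / 4 : ℝ) else 0} : Set (Fin n → ℝ)).ncard =
      2 ^ n - n := by
  constructor
  · ext d
    constructor
    · intro h
      exact forwardE d h
    · intro h
      simp only [Set.mem_setOf_eq] at h
      rcases h with rfl | ⟨S, hS2, rfl⟩
      · exact vertex_extreme 0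
          ⟨fun i => by norm_num, fun i => by simp⟩ (fun i => Or.inl rfl)
      · exact vertex_extreme _ (indicator_memP S hS2)
          (fun i => by by_cases h : i ∈ S <;> simp [h])
  · exact card_part
end

section
/- Let n ≥ 2 and let S ⊆ {1,…,n} be a subset with either S = ∅ or |S| ≥ 2. Then there exists a real binary tensor A : {0,1}^n → ℝ with Σ_v A(v)² = 1 such that d_k(A) = 1/4 for every k ∈ S and d_k(A) = 0 for every k ∉ S. (For |S| = i ≥ 2 one may take A with entries 1/√2 at the all-zero multi-index and at the multi-index with 1's exactly in the positions of S, and 0 elsewhere; for S = ∅ one may take any rank-one tensor of norm 1.) -/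
lemma iota_ne {n : ℕ} {k : Fin n} {b : Bool} {w : Fin n → Bool} (hw : w k ≠ b)
    (r : {j : Fin n // j ≠ k} → Bool) : iotaIdx n k b r ≠ w := by
  intro h
  apply hw
  rw [← h]
  simp [iotaIdx]

lemma iota_eq_iff {n : ℕ} {k : Fin n} {b : Bool} {w : Fin n → Bool} (hw : w k = b)
    (r : {j : Fin n // j ≠ k} → Bool) :
    iotaIdx n k b r = w ↔ r = fun j => w j.1 := by
  constructor
  · intro h
    funext j
    rw [← h]
    simp [iotaIdx, j.2]
  · intro h
    subst h
    funext j
    by_cases hj : j = k <;> simp [iotaIdx, hj, hw]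

/-- For every subset `S` of the directions with `S = ∅` or `|S| ≥ 2`, there is a binary
tensor of unit Frobenius norm whose Gram determinants are `1/4` exactly on `S` and `0`
elsewhere. -/
theorem exists_tensor_vertex (n : ℕ) (hn : 2 ≤ n) (S : Finset (Fin n))
    (hS : S = ∅ ∨ 2 ≤ S.card) :
    ∃ A : (Fin n → Bool) → ℝ,
      (∑ v : Fin n → Bool, (A v) ^ 2) = 1 ∧
      (∀ k ∈ S, gramDet n A k = 1 / 4) ∧
      (∀ k ∉ S, gramDet n A k = 0) := by
  rcases hS with hS | hS
  · subst hS
    refine ⟨fun v => if v = (fun _ => false) then 1 else 0, ?_, by simp, ?_⟩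
    · have h : ∀ v : Fin n → Bool,
          ((if v = (fun _ => false) then (1:ℝ) else 0))^2
            = if v = (fun _ => false) then 1 else 0 := by
        intro v; split <;> norm_num
      simp only [h, Finset.sum_ite_eq', Finset.mem_univ, if_true]
    · intro k _
      have h1 : ∀ r : {j : Fin n // j ≠ k} → Bool,
          (if iotaIdx n k true r = (fun _ => false) then (1:ℝ) else 0) = 0 := by
        intro r
        rw [if_neg]
        exact iota_ne (by simp) r
      unfold gramDet
      simp [h1]
  · -- |S| ≥ 2 case
    set c : ℝ := Real.sqrt (1/2) with hc
    have hc2 : c ^ 2 = 1/2 := Real.sq_sqrt (by norm_num)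
    set w0 : Fin n → Bool := fun _ => false with hw0
    set w1 : Fin n → Bool := fun j => decide (j ∈ S) with hw1
    obtain ⟨j0, hj0⟩ := Finset.card_pos.mp (by omega : 0 < S.card)
    have hne : w0 ≠ w1 := by
      intro h
      have := congrFun h j0
      simp [hw0, hw1, hj0] at this
    refine ⟨fun v => if v = w0 ∨ v = w1 then c else 0, ?_, ?_, ?_⟩
    · have h : ∀ v : Fin n → Bool,
          ((if v = w0 ∨ v = w1 then c else 0))^2
            = (if v = w0 then (1/2:ℝ) else 0) + (if v = w1 then (1/2:ℝ) else 0) := by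
        intro v
        by_cases h0 : v = w0 <;> by_cases h1 : v = w1
        · exact absurd (h0 ▸ h1) hne
        · simp [h0, h1, hc2, hne]
        · simp [h0, h1, hc2, hne, Ne.symm hne]
        · simp [h0, h1]
      simp only [h, Finset.sum_add_distrib, Finset.sum_ite_eq', Finset.mem_univ, if_true]
      norm_num
    · intro k hk
      have hk1 : w1 k = true := by simp [hw1, hk]
      have e0 : ∀ r : {j : Fin n // j ≠ k} → Bool,
          (if iotaIdx n k false r = w0 ∨ iotaIdx n k false r = w1 then c else 0)
            = if r = (fun j => w0 j.1) then c else 0 := by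
        intro r
        have h1 : iotaIdx n k false r ≠ w1 := iota_ne (by simp [hk1]) r
        simp [iota_eq_iff (show w0 k = false from rfl) r, h1]
      have e1 : ∀ r : {j : Fin n // j ≠ k} → Bool,
          (if iotaIdx n k true r = w0 ∨ iotaIdx n k true r = w1 then c else 0)
            = if r = (fun j => w1 j.1) then c else 0 := by
        intro r
        have h0 : iotaIdx n k true r ≠ w0 := iota_ne (by simp [hw0]) r
        simp [iota_eq_iff hk1 r, h0]
      have hr01 : (fun j : {j : Fin n // j ≠ k} => w0 j.1) ≠ (fun j => w1 j.1) := by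
        obtain ⟨j, hj, hjk⟩ := Finset.exists_mem_ne (s := S) (by omega) k
        intro h
        have := congrFun h ⟨j, hjk⟩
        simp [hw0, hw1, hj] at this
      have hsq : ∀ (r0 : {j : Fin n // j ≠ k} → Bool) (r : {j : Fin n // j ≠ k} → Bool),
          (if r = r0 then c else 0)^2 = if r = r0 then c^2 else 0 := by
        intro r0 r; split <;> norm_num
      unfold gramDet
      simp only [e0, e1, hsq, Finset.sum_ite_eq', Finset.mem_univ, if_true, hc2]
      have hcross : ∀ r : {j : Fin n // j ≠ k} → Bool,
          (if r = (fun j => w0 j.1) then c else 0) * (if r = (fun j => w1 j.1) then c else 0)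
            = 0 := by
        intro r
        by_cases h0 : r = (fun j => w0 j.1)
        · simp [h0, hr01]
        · simp [h0]
      rw [Finset.sum_congr rfl (fun r _ => hcross r)]
      norm_num
    · intro k hk
      have hk1 : w1 k = false := by simp [hw1, hk]
      have e1 : ∀ r : {j : Fin n // j ≠ k} → Bool,
          (if iotaIdx n k true r = w0 ∨ iotaIdx n k true r = w1 then c else 0) = 0 := by
        intro r
        have h0 : iotaIdx n k true r ≠ w0 := iota_ne (by simp [hw0]) r
        have h1 : iotaIdx n k true r ≠ w1 := iota_ne (by simp [hk1]) r
        simp [h0, h1]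
      unfold gramDet
      simp [e1]
end

section
/- For every real 2×2×2 tensor (a_{ijk})_{i,j,k∈{0,1}}, the following sum-of-squares identity holds: d₂ + d₃ − d₁ = 2(a₀₀₀a₀₁₁ − a₀₁₀a₀₀₁)² + 2(a₁₀₀a₁₁₁ − a₁₁₀a₁₀₁)² + (a₀₁₀a₁₀₁ + a₀₀₁a₁₁₀ − a₀₁₁a₁₀₀ − a₀₀₀a₁₁₁)². -/
/-- First Gram determinant of a real `2×2×2` tensor: `det (M Mᵀ)` for the flattening `M`
along the first index. -/
noncomputable def D1 (a : Bool → Bool → Bool → ℝ) : ℝ :=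
  (∑ j : Bool, ∑ k : Bool, (a false j k) ^ 2) * (∑ j : Bool, ∑ k : Bool, (a true j k) ^ 2) -
    (∑ j : Bool, ∑ k : Bool, a false j k * a true j k) ^ 2

/-- Second Gram determinant of a real `2×2×2` tensor. -/
noncomputable def D2 (a : Bool → Bool → Bool → ℝ) : ℝ :=
  (∑ i : Bool, ∑ k : Bool, (a i false k) ^ 2) * (∑ i : Bool, ∑ k : Bool, (a i true k) ^ 2) -
    (∑ i : Bool, ∑ k : Bool, a i false k * a i true k) ^ 2

/-- Third Gram determinant of a real `2×2×2` tensor. -/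
noncomputable def D3 (a : Bool → Bool → Bool → ℝ) : ℝ :=
  (∑ i : Bool, ∑ j : Bool, (a i j false) ^ 2) * (∑ i : Bool, ∑ j : Bool, (a i j true) ^ 2) -
    (∑ i : Bool, ∑ j : Bool, a i j false * a i j true) ^ 2

/-- Sum-of-squares identity: `d₂ + d₃ - d₁` is the given sum of three squares. -/
theorem sos_identity_2x2x2 (a : Bool → Bool → Bool → ℝ) :
    D2 a + D3 a - D1 a =
      2 * (a false false false * a false true true - a false true false * a false false true) ^ 2 +
      2 * (a true false false * a true true true - a true true false * a true false true) ^ 2 +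
      (a false true false * a true false true + a false false true * a true true false -
        a false true true * a true false false - a false false false * a true true true) ^ 2 := by
  simp only [D1, D2, D3, Fintype.sum_bool]; ring
end

section
/- For every real 2×2×2×2 tensor (a_{ijkl})_{i,j,k,l∈{0,1}}, the quantity d₂ + d₃ + d₄ − d₁ equals the following sum of 34 squares: 2(a₀₀₀₀a₀₀₁₁−a₀₀₀₁a₀₀₁₀)² + 2(a₀₀₀₀a₀₁₀₁−a₀₁₀₀a₀₀₀₁)² + 2(a₀₀₀₀a₀₁₁₀−a₀₀₁₀a₀₁₀₀)² + 2(a₁₀₀₀a₁₀₁₁−a₁₀₀₁a₁₀₁₀)² + 2(a₁₀₀₀a₁₁₀₁−a₁₁₀₀a₁₀₀₁)² + 2(a₁₀₀₀a₁₁₁₀−a₁₀₁₀a₁₁₀₀)² + 2(a₀₁₀₀a₀₁₁₁−a₀₁₀₁a₀₁₁₀)² + 2(a₀₀₁₀a₀₁₁₁−a₀₁₁₀a₀₀₁₁)² + 2(a₀₀₀₁a₀₁₁₁−a₀₀₁₁a₀₁₀₁)² + 2(a₁₁₀₀a₁₁₁₁−a₁₁₀₁a₁₁₁₀)² + 2(a₁₀₁₀a₁₁₁₁−a₁₁₁₀a₁₀₁₁)²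 + 2(a₁₀₀₁a₁₁₁₁−a₁₀₁₁a₁₁₀₁)² + (a₀₁₀₀a₁₀₁₀+a₀₀₁₀a₁₁₀₀−a₀₁₁₀a₁₀₀₀−a₀₀₀₀a₁₁₁₀)² + (a₀₁₀₁a₁₀₁₁+a₀₀₁₁a₁₁₀₁−a₀₁₁₁a₁₀₀₁−a₀₀₀₁a₁₁₁₁)² + (a₀₀₁₀a₁₀₀₁+a₀₀₀₁a₁₀₁₀−a₀₀₁₁a₁₀₀₀−a₀₀₀₀a₁₀₁₁)² + (a₀₁₁₀a₁₁₀₁+a₀₁₀₁a₁₁₁₀−a₀₁₁₁a₁₁₀₀−a₀₁₀₀a₁₁₁₁)² + (a₀₁₀₀a₁₀₀₁+a₀₀₀₁a₁₁₀₀−a₀₁₀₁a₁₀₀₀−a₀₀₀₀a₁₁₀₁)² + (a₀₁₁₀a₁₀₁₁+a₀₀₁₁a₁₁₁₀−a₀₁₁₁a₁₀₁₀−a₀₀₁₀a₁₁₁₁)² + (a₀₀₀₀a₀₁₁₁−a₀₀₀₁a₀₁₁₀)² + (a₀₀₀₀a₀₁₁₁−a₀₀₁₀a₀₁₀₁)²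 + (a₀₀₀₀a₀₁₁₁−a₀₁₀₀a₀₀₁₁)² + (a₁₀₀₀a₁₁₁₁−a₁₀₀₁a₁₁₁₀)² + (a₁₀₀₀a₁₁₁₁−a₁₀₁₀a₁₁₀₁)² + (a₁₀₀₀a₁₁₁₁−a₁₁₀₀a₁₀₁₁)² + (a₀₀₀₁a₀₁₁₀−a₀₀₁₁a₀₁₀₀)² + (a₀₀₀₁a₀₁₁₀−a₀₁₀₁a₀₀₁₀)² + (a₀₀₁₀a₀₁₀₁−a₀₁₀₀a₀₀₁₁)² + (a₁₀₀₁a₁₁₁₀−a₁₀₁₁a₁₁₀₀)² + (a₁₀₀₁a₁₁₁₀−a₁₁₀₁a₁₀₁₀)² + (a₁₀₁₀a₁₁₀₁−a₁₁₀₀a₁₀₁₁)² + (a₀₀₁₀a₁₁₀₁+a₀₁₁₁a₁₀₀₀−a₀₀₁₁a₁₁₀₀−a₀₁₁₀a₁₀₀₁)² + (a₀₀₀₀a₁₁₁₁−a₀₀₀₁a₁₁₁₀−a₀₁₀₀a₁₀₁₁+a₀₁₀₁a₁₀₁₀)² + (a₀₀₀₀a₁₁₁₁+a₀₁₁₁a₁₀₀₀−a₀₀₁₀a₁₁₀₁−a₀₁₀₁a₁₀₁₀)²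 + (a₀₁₀₀a₁₀₁₁+a₀₀₁₁a₁₁₀₀−a₀₀₀₁a₁₁₁₀−a₀₁₁₀a₁₀₀₁)². -/
/-- Gram determinant of a real 2x2x2x2 tensor along index 1. -/
noncomputable def E1 (a : Bool → Bool → Bool → Bool → ℝ) : ℝ :=
  (∑ j : Bool, ∑ k : Bool, ∑ l : Bool, (a false j k l) ^ 2) * (∑ j : Bool, ∑ k : Bool, ∑ l : Bool, (a true j k l) ^ 2) -
    (∑ j : Bool, ∑ k : Bool, ∑ l : Bool, a false j k l * a true j k l) ^ 2

/-- Gram determinant of a real 2x2x2x2 tensor along index 2. -/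
noncomputable def E2 (a : Bool → Bool → Bool → Bool → ℝ) : ℝ :=
  (∑ j : Bool, ∑ k : Bool, ∑ l : Bool, (a j false k l) ^ 2) * (∑ j : Bool, ∑ k : Bool, ∑ l : Bool, (a j true k l) ^ 2) -
    (∑ j : Bool, ∑ k : Bool, ∑ l : Bool, a j false k l * a j true k l) ^ 2

/-- Gram determinant of a real 2x2x2x2 tensor along index 3. -/
noncomputable def E3 (a : Bool → Bool → Bool → Bool → ℝ) : ℝ :=
  (∑ j : Bool, ∑ k : Bool, ∑ l : Bool, (a j k false l) ^ 2) * (∑ j : Bool, ∑ k : Bool, ∑ l : Bool, (a j k true l) ^ 2) -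
    (∑ j : Bool, ∑ k : Bool, ∑ l : Bool, a j k false l * a j k true l) ^ 2

/-- Gram determinant of a real 2x2x2x2 tensor along index 4. -/
noncomputable def E4 (a : Bool → Bool → Bool → Bool → ℝ) : ℝ :=
  (∑ j : Bool, ∑ k : Bool, ∑ l : Bool, (a j k l false) ^ 2) * (∑ j : Bool, ∑ k : Bool, ∑ l : Bool, (a j k l true) ^ 2) -
    (∑ j : Bool, ∑ k : Bool, ∑ l : Bool, a j k l false * a j k l true) ^ 2

/-- Sum-of-squares identity expressing d2 + d3 + d4 - d1 as a sum of 34 squares. -/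
theorem sos_identity_2x2x2x2 (a : Bool → Bool → Bool → Bool → ℝ) :
    E2 a + E3 a + E4 a - E1 a =
      2 * (a false false false false * a false false true true - a false false false true * a false false true false) ^ 2 +
      2 * (a false false false false * a false true false true - a false true false false * a false false false true) ^ 2 +
      2 * (a false false false false * a false true true false - a false false true false * a false true false false) ^ 2 +
      2 * (a true false false false * a true false true true - a true false false true * a true false true false) ^ 2 +
      2 * (a true false false false * a true true false true - a true true false false * a true false false true) ^ 2 +
      2 * (a true false false false * a true true true false - a true false true false * a true true false false) ^ 2 +
      2 * (a false true false false * a false true true true - a false true false true * a false true true false) ^ 2 +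
      2 * (a false false true false * a false true true true - a false true true false * a false false true true) ^ 2 +
      2 * (a false false false true * a false true true true - a false false true true * a false true false true) ^ 2 +
      2 * (a true true false false * a true true true true - a true true false true * a true true true false) ^ 2 +
      2 * (a true false true false * a true true true true - a true true true false * a true false true true) ^ 2 +
      2 * (a true false false true * a true true true true - a true false true true * a true true false true) ^ 2 +
      (a false true false false * a true false true false + a false false true false * a true true false false - a false true true false * a true false false false - a false false false false * a true true true false) ^ 2 +
      (a false true false true * a true false true true + a false false true true * a true true false true - a false true true true * a true false false true - a false false false true * a true true true true) ^ 2 +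
      (a false false true false * a true false false true + a false false false true * a true false true false - a false false true true * a true false false false - a false false false false * a true false true true) ^ 2 +
      (a false true true false * a true true false true + a false true false true * a true true true false - a false true true true * a true true false false - a false true false false * a true true true true) ^ 2 +
      (a false true false false * a true false false true + a false false false true * a true true false false - a false true false true * a true false false false - a false false false false * a true true false true) ^ 2 +
      (a false true true false * a true false true true + a false false true true * a true true true false - a false true true true * a true false true false - a false false true false * a true true true true) ^ 2 +
      (a false false false false * a false true true true - a false false false true * a false true true false) ^ 2 +
      (a false false false false * a false true true true - a false false true false * a false true false true) ^ 2 +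
      (a false false false false * a false true true true - a false true false false * a false false true true) ^ 2 +
      (a true false false false * a true true true true - a true false false true * a true true true false) ^ 2 +
      (a true false false false * a true true true true - a true false true false * a true true false true) ^ 2 +
      (a true false false false * a true true true true - a true true false false * a true false true true) ^ 2 +
      (a false false false true * a false true true false - a false false true true * a false true false false) ^ 2 +
      (a false false false true * a false true true false - a false true false true * a false false true false) ^ 2 +
      (a false false true false * a false true false true - a false true false false * a false false true true) ^ 2 +
      (a true false false true * a true true true false - a true false true true * a true true false false) ^ 2 +
      (a true false false true * a true true true false - a true true false true * a true false true false) ^ 2 +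
      (a true false true false * a true true false true - a true true false false * a true false true true) ^ 2 +
      (a false false true false * a true true false true + a false true true true * a true false false false - a false false true true * a true true false false - a false true true false * a true false false true) ^ 2 +
      (a false false false false * a true true true true - a false false false true * a true true true false - a false true false false * a true false true true + a false true false true * a true false true false) ^ 2 +
      (a false false false false * a true true true true + a false true true true * a true false false false - a false false true false * a true true false true - a false true false true * a true false true false) ^ 2 +
      (a false true false false * a true false true true + a false false true true * a true true false false - a false false false true * a true true true false - a false true true false * a true false false true) ^ 2 := by
  simp only [E1,E2,E3,E4, Fintype.sum_bool]
  ring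
end

section
/- Let n ≥ 2. In the polynomial ring ℝ[x_v : v ∈ {0,1}^n], consider the quartic polynomial D = d₂ + d₃ + ⋯ + d_n − d₁, where d_k = (Σ_r x_{ι_k(0,r)}²)·(Σ_r x_{ι_k(1,r)}²) − (Σ_r x_{ι_k(0,r)} x_{ι_k(1,r)})². Then D is a finite sum of squares of homogeneous polynomials of degree 2. -/
open MvPolynomial

/-- The `k`-th Gram determinant of the generic binary tensor, as a polynomial in the
variables `x_v`, `v ∈ {0,1}^n`. -/
noncomputable def gramDetPoly (n : ℕ) (k : Fin n) : MvPolynomial (Fin n → Bool) ℝ :=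
  (∑ r : {j : Fin n // j ≠ k} → Bool, (X (iotaIdx n k false r)) ^ 2) *
    (∑ r : {j : Fin n // j ≠ k} → Bool, (X (iotaIdx n k true r)) ^ 2) -
  (∑ r : {j : Fin n // j ≠ k} → Bool, X (iotaIdx n k false r) * X (iotaIdx n k true r)) ^ 2

/-!
Identify `{0,1}ⁿ` with `(ℤ/2)ⁿ`, the group law being `∆`, and let
`L(e, ξ) = ∑_v (-1)^⟨ξ, v⟩ x_v x_{v+e}` be the ambiguity function of the tensor `x`.
Orthogonality of characters gives `∑_{e_k = ξ_k = 1} L(e, ξ)² = 2ⁿ d_k`, hence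
`2ⁿ (d₂ + ⋯ + d_n - d₁) = ∑_{e,ξ} w(e, ξ) L(e, ξ)²` with
`w(e, ξ) = #{k ≠ 1 | e_k = ξ_k = 1} - [e₁ = ξ₁ = 1]`.
If `⟨ξ, e⟩` is odd then `L(e, ξ) = 0`, because `v ↦ v + e` flips its sign; if it is even then
`#{k | e_k = ξ_k = 1}` is even, so `w(e, ξ) ≥ 0`. Every term is therefore the square of
`√(w(e, ξ) / 2ⁿ) L(e, ξ)`.
-/

open Finset
open scoped symmDiff

namespace GramDet

section Characters

variable {ι : Type*} [Fintype ι]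

def sign (ξ v : ι → Bool) : ℤ := ∏ j, if ξ j && v j then -1 else 1

lemma sign_symmDiff (ξ v w : ι → Bool) : sign ξ (v ∆ w) = sign ξ v * sign ξ w := by
  rw [sign, sign, sign, ← prod_mul_distrib]
  refine prod_congr rfl fun j _ => ?_
  rw [Pi.symmDiff_apply, Bool.symmDiff_eq_xor]
  cases ξ j <;> cases v j <;> cases w j <;> rfl

lemma sign_mul_self (ξ v : ι → Bool) : sign ξ v * sign ξ v = 1 := by
  rw [← sign_symmDiff, symmDiff_self]
  simp [sign]

lemma sign_eq_neg_one_pow_card (ξ v : ι → Bool) : sign ξ v = (-1) ^ #{j | ξ j && v j} := by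
  rw [sign, prod_ite, prod_const, prod_const_one, mul_one]

variable [DecidableEq ι]

def single (k : ι) : ι → Bool := fun j => decide (j = k)

lemma sign_single (ξ : ι → Bool) (k : ι) : sign ξ (single k) = if ξ k then -1 else 1 := by
  rw [sign, prod_eq_single k (fun j _ hj => by simp [single, hj]) (by simp)]
  simp [single]

lemma sum_sign (u : ι → Bool) : ∑ ξ, sign ξ u = if u = ⊥ then 2 ^ Fintype.card ι else 0 := by
  have hcoord : ∀ j, ∑ b : Bool, (if b && u j then (-1 : ℤ) else 1) =
      if u j = false then 2 else 0 := fun j => by cases u j <;> rfl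
  have hbot : (∀ j, u j = false) ↔ u = ⊥ := funext_iff.symm
  calc ∑ ξ, sign ξ u = ∏ j, ∑ b : Bool, (if b && u j then (-1 : ℤ) else 1) :=
        (Fintype.prod_sum fun j b => if b && u j then (-1 : ℤ) else 1).symm
    _ = _ := by simp_rw [hcoord, Fintype.prod_ite_zero, hbot, prod_const, card_univ]

lemma sum_filter_sign (k : ι) (u : ι → Bool) :
    ∑ ξ with ξ k, sign ξ u =
      2 ^ (Fintype.card ι - 1) * ((if u = ⊥ then 1 else 0) - if u = single k then 1 else 0) := by
  -- `2 [ξ k] = 1 - sign ξ (single k)`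
  have hdouble : 2 * ∑ ξ with ξ k, sign ξ u = ∑ ξ, sign ξ u - ∑ ξ, sign ξ (u ∆ single k) := by
    rw [sum_filter, mul_sum, ← sum_sub_distrib]
    refine sum_congr rfl fun ξ _ => ?_
    rw [sign_symmDiff, sign_single]
    cases ξ k <;> simp
    ring
  have hcard : (2 : ℤ) ^ Fintype.card ι = 2 * 2 ^ (Fintype.card ι - 1) := by
    rw [← pow_succ', Nat.sub_add_cancel (Fintype.card_pos_iff.2 ⟨k⟩)]
  apply mul_left_cancel₀ (two_ne_zero (α := ℤ))
  simp only [hdouble, sum_sign, symmDiff_eq_bot, hcard]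
  split_ifs <;> ring

variable {A : Type*} [CommRing A]

lemma sum_filter_sq_sum_sign_smul (k : ι) (G : (ι → Bool) → A) :
    ∑ ξ with ξ k, (∑ v, sign ξ v • G v) ^ 2 =
      2 ^ (Fintype.card ι - 1) * ∑ v, G v * (G v - G (v ∆ single k)) := by
  have hsq : ∀ ξ, (∑ v, sign ξ v • G v) ^ 2 = ∑ v, ∑ w, sign ξ (v ∆ w) • (G v * G w) := by
    intro ξ
    simp_rw [sq, sum_mul_sum, sign_symmDiff, mul_smul, smul_mul_smul_comm, mul_smul]
  have hshift : ∀ v w : ι → Bool, v ∆ w = single k ↔ w = v ∆ single k := fun v w => by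
    rw [← symmDiff_right_inj (a := v), symmDiff_symmDiff_cancel_left]
  calc ∑ ξ with ξ k, (∑ v, sign ξ v • G v) ^ 2
      = ∑ v, ∑ w, (∑ ξ with ξ k, sign ξ (v ∆ w)) • (G v * G w) := by
        simp_rw [hsq, sum_smul]
        rw [sum_comm]
        exact sum_congr rfl fun v _ => sum_comm
    _ = _ := by
        simp_rw [sum_filter_sign, symmDiff_eq_bot, hshift, mul_smul, ← smul_sum, sub_smul, ite_smul,
          one_smul, zero_smul, sum_sub_distrib, sum_ite_eq, sum_ite_eq', mem_univ, if_true,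
          ← sum_sub_distrib, ← mul_sub, zsmul_eq_mul]
        push_cast
        rfl

lemma sum_filter_sum_mul_symmDiff (k : ι) (G : (ι → Bool) → A) :
    ∑ e with e k, ∑ v, G v * G (v ∆ e) =
      2 * ((∑ v with v k = false, G v) * ∑ v with v k = true, G v) := by
  set S : Bool → A := fun b => ∑ w with w k = b, G w
  have hreindex : ∀ v, ∑ e with e k, G (v ∆ e) = S (!v k) := fun v => by
    refine sum_nbij' (v ∆ ·) (v ∆ ·) ?_ ?_ (fun _ _ => symmDiff_symmDiff_cancel_left ..)
      (fun _ _ => symmDiff_symmDiff_cancel_left ..) (fun _ _ => rfl) <;>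
    · intro e
      cases hv : v k <;> cases he : e k <;> simp [Pi.symmDiff_apply, hv, he]
  calc ∑ e with e k, ∑ v, G v * G (v ∆ e)
      = ∑ v, G v * S (!v k) := by
        rw [sum_comm]
        simp_rw [← mul_sum, hreindex]
    _ = ∑ b, ∑ v with v k = b, G v * S (!b) := by
        rw [← sum_fiberwise univ (· k)]
        refine sum_congr rfl fun b _ => sum_congr rfl fun v hv => ?_
        rw [(mem_filter.1 hv).2]
    _ = _ := by
        simp_rw [← sum_mul, Fintype.sum_bool, S, Bool.not_true, Bool.not_false]
        ring

end Characters

section Weight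

variable {ι : Type*} [Fintype ι] [DecidableEq ι]

def weight (k₀ : ι) (e ξ : ι → Bool) : ℤ :=
  ∑ k ∈ univ.erase k₀, (if e k && ξ k then 1 else 0) - if e k₀ && ξ k₀ then 1 else 0

lemma sum_sum_weight_smul {A : Type*} [AddCommGroup A] (k₀ : ι)
    (F : (ι → Bool) → (ι → Bool) → A) :
    ∑ e, ∑ ξ, weight k₀ e ξ • F e ξ =
      ∑ k ∈ univ.erase k₀, ∑ e with e k, ∑ ξ with ξ k, F e ξ -
        ∑ e with e k₀, ∑ ξ with ξ k₀, F e ξ := by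
  have hind : ∀ k, ∑ e, ∑ ξ, (if e k && ξ k then (1 : ℤ) else 0) • F e ξ =
      ∑ e with e k, ∑ ξ with ξ k, F e ξ := fun k => by
    simp_rw [sum_filter, ite_smul, one_smul, zero_smul, Bool.and_eq_true, ite_and]
    exact sum_congr rfl fun e _ => by split_ifs <;> simp
  simp_rw [weight, sub_smul, sum_smul, sum_sub_distrib, hind, ← hind]
  congr 1
  conv_rhs => rw [sum_comm]
  exact sum_congr rfl fun _ _ => sum_comm

lemma weight_nonneg {k₀ : ι} {e ξ : ι → Bool} (h : sign ξ e = 1) : 0 ≤ weight k₀ e ξ := by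
  set s : Finset ι := {k | e k && ξ k}
  have heven : Even #s := by
    rw [sign_eq_neg_one_pow_card, neg_one_pow_eq_one_iff_even (by decide)] at h
    simpa only [s, Bool.and_comm] using h
  rw [weight, sum_boole, filter_erase]
  split_ifs with hk₀
  · have hmem : k₀ ∈ s := mem_filter.2 ⟨mem_univ _, hk₀⟩
    obtain ⟨c, hc⟩ := heven
    have := card_pos.2 ⟨k₀, hmem⟩
    rw [card_erase_of_mem hmem]
    omega
  · simp

end Weight

section Ambiguity

variable {ι : Type*} [Fintype ι] [DecidableEq ι]

noncomputable def ambiguity (e ξ : ι → Bool) : MvPolynomial (ι → Bool) ℝ :=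
  ∑ v, sign ξ v • (X v * X (v ∆ e))

lemma ambiguity_isHomogeneous (e ξ : ι → Bool) : (ambiguity e ξ).IsHomogeneous 2 := by
  rw [← mem_homogeneousSubmodule]
  exact Submodule.sum_mem _ fun v _ => Submodule.smul_of_tower_mem _ _
    ((mem_homogeneousSubmodule _ _).2 ((isHomogeneous_X ℝ v).mul (isHomogeneous_X ℝ _)))

lemma ambiguity_eq_sign_smul (e ξ : ι → Bool) : ambiguity e ξ = sign ξ e • ambiguity e ξ := by
  rw [ambiguity, smul_sum]
  refine Fintype.sum_bijective (· ∆ e) (symmDiff_left_involutive e).bijective _ _ fun v => ?_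
  rw [symmDiff_symmDiff_cancel_right, sign_symmDiff, smul_smul, mul_left_comm, sign_mul_self,
    mul_one, mul_comm (X _)]

lemma ambiguity_eq_zero {e ξ : ι → Bool} (h : sign ξ e = -1) : ambiguity e ξ = 0 := by
  have := ambiguity_eq_sign_smul e ξ
  rw [h, neg_one_smul] at this
  exact self_eq_neg.1 this

lemma sq_sqrt_weight_div_smul_ambiguity (k₀ : ι) (e ξ : ι → Bool) {c : ℝ} (hc : 0 ≤ c) :
    (√(weight k₀ e ξ / c) • ambiguity e ξ) ^ 2 = c⁻¹ • weight k₀ e ξ • ambiguity e ξ ^ 2 := by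
  rcases mul_self_eq_one_iff.1 (sign_mul_self ξ e) with h | h
  · rw [smul_pow, Real.sq_sqrt (div_nonneg (Int.cast_nonneg (weight_nonneg h)) hc),
      ← Int.cast_smul_eq_zsmul ℝ, smul_smul, div_eq_inv_mul]
  · simp [ambiguity_eq_zero h]

end Ambiguity

variable {n : ℕ}

lemma sum_iotaIdx {M : Type*} [AddCommMonoid M] (k : Fin n) (b : Bool)
    (f : (Fin n → Bool) → M) :
    ∑ r, f (iotaIdx n k b r) = ∑ v with v k = b, f v := by
  refine sum_nbij' (iotaIdx n k b) (fun v j => v j) (by simp [iotaIdx]) (by simp)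
    (fun r _ => funext fun j => by simp [iotaIdx, j.2]) (fun v hv => funext fun j => ?_)
    (fun _ _ => rfl)
  by_cases h : j = k
  · subst h
    simp [iotaIdx, (mem_filter.1 hv).2]
  · simp [iotaIdx, h]

lemma iotaIdx_symmDiff_single (k : Fin n) (b : Bool) (r : {j : Fin n // j ≠ k} → Bool) :
    iotaIdx n k b r ∆ single k = iotaIdx n k (!b) r := by
  funext j
  by_cases h : j = k
  · subst h
    simp [iotaIdx, single, Pi.symmDiff_apply]
  · simp [iotaIdx, single, Pi.symmDiff_apply, h]

lemma sum_filter_sum_filter_ambiguity_sq (k : Fin n) :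
    ∑ e with e k, ∑ ξ with ξ k, ambiguity e ξ ^ 2 = 2 ^ n * gramDetPoly n k := by
  have hpair : ∀ e v : Fin n → Bool,
      (X v * X (v ∆ e) * (X v * X (v ∆ e) - X (v ∆ single k) * X (v ∆ single k ∆ e)) :
        MvPolynomial (Fin n → Bool) ℝ) =
        X v ^ 2 * X (v ∆ e) ^ 2 -
          X v * X (v ∆ single k) * (X (v ∆ e) * X (v ∆ e ∆ single k)) := fun e v => by
    rw [symmDiff_right_comm]
    ring
  have hcross : ∀ b, ∑ v with v k = b, (X v * X (v ∆ single k) : MvPolynomial _ ℝ) =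
      ∑ r, X (iotaIdx n k false r) * X (iotaIdx n k true r) := fun b => by
    rw [← sum_iotaIdx]
    cases b <;> simp [iotaIdx_symmDiff_single, mul_comm]
  have hpow : (2 : MvPolynomial (Fin n → Bool) ℝ) ^ (Fintype.card (Fin n) - 1) * 2 = 2 ^ n := by
    rw [← pow_succ, Fintype.card_fin, Nat.sub_add_cancel k.pos]
  simp_rw [ambiguity, sum_filter_sq_sum_sign_smul, hpair, sum_sub_distrib, ← mul_sum,
    sum_sub_distrib]
  rw [sum_filter_sum_mul_symmDiff k (fun v => X v ^ 2),
    sum_filter_sum_mul_symmDiff k (fun v => X v * X (v ∆ single k)), hcross, hcross,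
    ← sum_iotaIdx, ← sum_iotaIdx, gramDetPoly, ← hpow]
  ring

lemma sum_sum_weight_smul_ambiguity_sq (k₀ : Fin n) :
    ∑ e, ∑ ξ, weight k₀ e ξ • ambiguity e ξ ^ 2 =
      2 ^ n * (∑ k ∈ univ.erase k₀, gramDetPoly n k - gramDetPoly n k₀) := by
  simp_rw [sum_sum_weight_smul, sum_filter_sum_filter_ambiguity_sq, ← mul_sum, mul_sub]

end GramDet

open GramDet in
/-- The quartic `d₂ + ⋯ + d_n - d₁` is a sum of squares of homogeneous quadrics. -/
theorem gramDiff_isSumOfSquares (n : ℕ) (hn : 2 ≤ n) :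
    ∃ (m : ℕ) (p : Fin m → MvPolynomial (Fin n → Bool) ℝ),
      (∀ i : Fin m, (p i).IsHomogeneous 2) ∧
      (∑ k ∈ Finset.univ.erase (⟨0, by omega⟩ : Fin n), gramDetPoly n k) -
          gramDetPoly n ⟨0, by omega⟩ =
        ∑ i : Fin m, (p i) ^ 2 := by
  set k₀ : Fin n := ⟨0, by omega⟩
  let q : (Fin n → Bool) × (Fin n → Bool) → MvPolynomial (Fin n → Bool) ℝ :=
    fun p => √(weight k₀ p.1 p.2 / 2 ^ n) • ambiguity p.1 p.2
  let E := Fintype.equivFin ((Fin n → Bool) × (Fin n → Bool))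
  refine ⟨_, fun i => q (E.symm i), fun i => (mem_homogeneousSubmodule _ _).1
    (Submodule.smul_mem _ _ ((mem_homogeneousSubmodule _ _).2 (ambiguity_isHomogeneous _ _))), ?_⟩
  rw [Equiv.sum_comp E.symm (q · ^ 2), Fintype.sum_prod_type]
  simp_rw [q, sq_sqrt_weight_div_smul_ambiguity k₀ _ _ (by positivity : (0 : ℝ) ≤ 2 ^ n),
    ← smul_sum, sum_sum_weight_smul_ambiguity_sq]
  rw [← map_ofNat C 2, ← map_pow, ← smul_eq_C_mul, inv_smul_smul₀ (by positivity)]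
end

section
/- Let n ≥ 2 and let A : {0,1}^n → ℝ be a real binary tensor. For each m with 2 ≤ m ≤ n, the m-th piece of d₂+⋯+d_n−d₁ is non-negative: Σ_{k=2}^n Σ_{{r,s} : w(r,s)=m} μ_{k,r,s}(A)² ≥ Σ_{{r,s} : w(r,s)=m} μ_{1,r,s}(A)², where both inner sums run over unordered pairs {r,s} of distinct elements of {0,1}^{n−1} whose number of differing coordinates equals m−1. -/
open scoped Classical

/-- The squared `2×2` minor of the `k`-th flattening of `A` corresponding to an unordered
pair of columns `{r, s}`; it is well defined on unordered pairs since the minor changes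
only by a sign under swapping `r` and `s`. -/
noncomputable def minorSq (n : ℕ) (A : (Fin n → Bool) → ℝ) (k : Fin n) :
    Sym2 ({j : Fin n // j ≠ k} → Bool) → ℝ :=
  Sym2.lift ⟨fun r s =>
    (A (iotaIdx n k false r) * A (iotaIdx n k true s) -
      A (iotaIdx n k true r) * A (iotaIdx n k false s)) ^ 2,
    fun r s => by ring⟩

/-- The weight `w(r,s) = 1 + #{positions where r and s differ}` of an unordered pair of
columns. -/
noncomputable def pairWeight (n : ℕ) (k : Fin n) :
    Sym2 ({j : Fin n // j ≠ k} → Bool) → ℕ :=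
  Sym2.lift ⟨fun r s => 1 + (Finset.univ.filter (fun j => r j ≠ s j)).card,
    fun r s => by simp [ne_comm]⟩


/-
Fix a flattening `k`. A pair of columns `(r, s)` together with a bit `b` corresponds to the
pair of multi-indices `x = ι_k(b, r)` and `y = ι_k(!b, s)`, and `y` is `x` with the coordinates
in `D = {k} ∪ {j | r j ≠ s j}` flipped, where `|D| = w(r, s)`. With `H_D x = A x · A (flip_D x)`
the squared minor is `(H_D x - H_D (flip_k x))²`. Counting both bits `b` and both orders of
`{r, s}`, four times the `m`-th piece of `d_k` is `∑_{|D| = m, k ∈ D} E_k(H_D)`, where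
`E_S(H) = ∑_x (H x - H (flip_S x))²` (`flipEnergy H S`).

Since `H_D ∘ flip_D = H_D`, we get `E_{k₀}(H_D) = E_{D \ k₀}(H_D)`, and the Poincaré-type
inequality `E_S(H) ≤ ∑_{k ∈ S} E_k(H)` (by induction on `S`, from the case of two commuting
involutions) bounds this by `∑_{k ∈ D \ k₀} E_k(H_D)`. Summing over `D` gives the claim.
-/

namespace BinaryTensor

open Finset Function

-- Averaged over the group `{id, σ, τ, στ}`, the defect of this inequality is
-- `½ ∑ x, (H x - H (σ x) - H (τ x) + H (σ (τ x)))²`.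
theorem sum_sq_sub_comp_comp_le {X : Type*} [Fintype X] {σ τ : X → X}
    (hσ : Involutive σ) (hτ : Involutive τ) (hστ : Function.Commute σ τ) (H : X → ℝ) :
    ∑ x, (H x - H (σ (τ x))) ^ 2 ≤ ∑ x, (H x - H (σ x)) ^ 2 + ∑ x, (H x - H (τ x)) ^ 2 := by
  set F : X → ℝ := fun x =>
    (H x - H (σ x)) ^ 2 + (H x - H (τ x)) ^ 2 - (H x - H (σ (τ x))) ^ 2 with hF
  have hστ' : ∀ x, τ (σ x) = σ (τ x) := fun x => (hστ x).symm
  have hpoint : ∀ x, F x + F (σ x) + F (τ x) + F (σ (τ x)) =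
      2 * (H x - H (σ x) - H (τ x) + H (σ (τ x))) ^ 2 := by
    intro x
    simp only [hF, hσ x, hτ x, hστ', hσ (τ x)]
    ring
  have hFσ : ∑ x, F (σ x) = ∑ x, F x := Equiv.sum_comp (hσ.toPerm σ) F
  have hFτ : ∑ x, F (τ x) = ∑ x, F x := Equiv.sum_comp (hτ.toPerm τ) F
  have hFστ : ∑ x, F (σ (τ x)) = ∑ x, F x :=
    Equiv.sum_comp ((hτ.toPerm τ).trans (hσ.toPerm σ)) F
  have hF_nonneg : 0 ≤ ∑ x, F x := by
    have h4 : 4 * ∑ x, F x = ∑ x, 2 * (H x - H (σ x) - H (τ x) + H (σ (τ x))) ^ 2 := by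
      simp only [← hpoint, sum_add_distrib, hFσ, hFτ, hFστ]
      ring
    linarith [sum_nonneg fun x (_ : x ∈ univ) =>
      mul_nonneg zero_le_two (sq_nonneg (H x - H (σ x) - H (τ x) + H (σ (τ x))))]
  simp only [hF, sum_sub_distrib, sum_add_distrib] at hF_nonneg
  linarith

theorem sum_offDiag_filter_sym2_mk {α M : Type*} [Fintype α] [DecidableEq α] [AddCommMonoid M]
    (P : Sym2 α → Prop) [DecidablePred P] (f : Sym2 α → M) :
    ∑ z ∈ univ.offDiag with P s(z.1, z.2), f s(z.1, z.2) =
      2 • ∑ p with ¬p.IsDiag ∧ P p, f p := by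
  rw [← sum_fiberwise_of_maps_to (g := fun z : α × α => s(z.1, z.2))
    (t := univ.filter fun p => ¬p.IsDiag ∧ P p) (by simp +contextual), smul_sum]
  refine sum_congr rfl fun p hp => ?_
  induction p using Sym2.ind with
  | _ a b =>
    obtain ⟨hab, hP⟩ : a ≠ b ∧ P s(a, b) := by simpa using hp
    have hfiber : ({z ∈ univ.offDiag | P s(z.1, z.2)} : Finset (α × α)).filter
        (fun z => s(z.1, z.2) = s(a, b)) = {(a, b), (b, a)} := by
      ext ⟨x, y⟩
      simp only [mem_filter, mem_offDiag, mem_univ, true_and, mem_insert, mem_singleton,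
        Prod.mk.injEq, Sym2.eq_iff]
      refine ⟨And.right, ?_⟩
      rintro (⟨rfl, rfl⟩ | ⟨rfl, rfl⟩)
      · exact ⟨⟨hab, hP⟩, .inl ⟨rfl, rfl⟩⟩
      · exact ⟨⟨hab.symm, Sym2.eq_swap ▸ hP⟩, .inr ⟨rfl, rfl⟩⟩
    rw [hfiber, sum_pair (by simp [hab]), Sym2.eq_swap, two_smul]

section Cube

variable {ι : Type*} [DecidableEq ι]

def flipCoords (S : Finset ι) (x : ι → Bool) : ι → Bool :=
  fun j => if j ∈ S then !x j else x j

@[simp]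
lemma flipCoords_apply (S : Finset ι) (x : ι → Bool) (j : ι) :
    flipCoords S x j = if j ∈ S then !x j else x j := rfl

@[simp]
lemma flipCoords_empty : flipCoords (∅ : Finset ι) = id := by
  funext x j; simp

lemma flipCoords_involutive (S : Finset ι) : Involutive (flipCoords S) := by
  intro x; funext j; by_cases hj : j ∈ S <;> simp [hj]

lemma flipCoords_commute (S T : Finset ι) :
    Function.Commute (flipCoords S) (flipCoords T) := by
  intro x; funext j; by_cases hS : j ∈ S <;> by_cases hT : j ∈ T <;> simp [hS, hT]

lemma flipCoords_insert {a : ι} {S : Finset ι} (ha : a ∉ S) :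
    flipCoords (insert a S) = flipCoords S ∘ flipCoords {a} := by
  funext x j
  by_cases hj : j = a
  · subst hj; simp [ha]
  · simp [hj]

def flipProd (A : (ι → Bool) → ℝ) (D : Finset ι) (x : ι → Bool) : ℝ :=
  A x * A (flipCoords D x)

lemma flipProd_flipCoords (A : (ι → Bool) → ℝ) (D : Finset ι) (x : ι → Bool) :
    flipProd A D (flipCoords D x) = flipProd A D x := by
  rw [flipProd, flipProd, flipCoords_involutive D x, mul_comm]

variable [Fintype ι]

lemma flipCoords_filter_ne (r s : ι → Bool) : flipCoords {j | r j ≠ s j} r = s := by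
  funext j; cases h : r j <;> cases h' : s j <;> simp [h, h']

def flipEnergy (H : (ι → Bool) → ℝ) (S : Finset ι) : ℝ :=
  ∑ x, (H x - H (flipCoords S x)) ^ 2

lemma flipEnergy_nonneg (H : (ι → Bool) → ℝ) (S : Finset ι) : 0 ≤ flipEnergy H S :=
  sum_nonneg fun _ _ => sq_nonneg _

theorem flipEnergy_le_sum_flipEnergy_singleton (H : (ι → Bool) → ℝ) (S : Finset ι) :
    flipEnergy H S ≤ ∑ k ∈ S, flipEnergy H {k} := by
  induction S using Finset.induction_on with
  | empty => simp [flipEnergy]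
  | insert a S ha ih =>
    have hstep : flipEnergy H (insert a S) ≤ flipEnergy H S + flipEnergy H {a} := by
      simpa only [flipEnergy, flipCoords_insert ha, comp_apply] using
        sum_sq_sub_comp_comp_le (flipCoords_involutive S) (flipCoords_involutive {a})
          (flipCoords_commute S {a}) H
    rw [sum_insert ha]
    linarith

lemma flipEnergy_singleton_eq_erase {H : (ι → Bool) → ℝ} {D : Finset ι}
    (hH : ∀ x, H (flipCoords D x) = H x) {k : ι} (hk : k ∈ D) :
    flipEnergy H {k} = flipEnergy H (D.erase k) := by
  have hD : flipCoords D = flipCoords (D.erase k) ∘ flipCoords {k} := by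
    conv_lhs => rw [← insert_erase hk]
    exact flipCoords_insert (notMem_erase k D)
  have hflip : ∀ x, flipCoords {k} x = flipCoords D (flipCoords (D.erase k) x) := by
    intro x
    rw [hD, comp_apply, flipCoords_commute {k}, flipCoords_involutive]
  simp only [flipEnergy, hflip, hH]

theorem flipEnergy_flipProd_le (A : (ι → Bool) → ℝ) {D : Finset ι} {k : ι} (hk : k ∈ D) :
    flipEnergy (flipProd A D) {k} ≤ ∑ j ∈ D.erase k, flipEnergy (flipProd A D) {j} := by
  rw [flipEnergy_singleton_eq_erase (flipProd_flipCoords A D) hk]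
  exact flipEnergy_le_sum_flipEnergy_singleton _ _

theorem sum_flipEnergy_flipProd_le (A : (ι → Bool) → ℝ) (𝒟 : Finset (Finset ι)) (k₀ : ι) :
    ∑ D ∈ 𝒟 with k₀ ∈ D, flipEnergy (flipProd A D) {k₀} ≤
      ∑ k ∈ univ.erase k₀, ∑ D ∈ 𝒟 with k ∈ D, flipEnergy (flipProd A D) {k} :=
  calc ∑ D ∈ 𝒟 with k₀ ∈ D, flipEnergy (flipProd A D) {k₀}
      ≤ ∑ D ∈ 𝒟 with k₀ ∈ D, ∑ k ∈ D.erase k₀, flipEnergy (flipProd A D) {k} :=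
        sum_le_sum fun D hD => flipEnergy_flipProd_le A (mem_filter.1 hD).2
    _ ≤ ∑ D ∈ 𝒟, ∑ k ∈ D.erase k₀, flipEnergy (flipProd A D) {k} :=
        sum_le_sum_of_subset_of_nonneg (filter_subset _ _) fun D _ _ =>
          sum_nonneg fun k _ => flipEnergy_nonneg _ _
    _ = ∑ k ∈ univ.erase k₀, ∑ D ∈ 𝒟 with k ∈ D, flipEnergy (flipProd A D) {k} :=
        sum_comm' fun D k => by simp only [mem_erase, mem_univ, mem_filter]; tauto

end Cube

section Flattening

variable {n : ℕ} (A : (Fin n → Bool) → ℝ) (k : Fin n)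

lemma iotaIdx_self (b : Bool) (r : {j : Fin n // j ≠ k} → Bool) : iotaIdx n k b r k = b :=
  dif_pos rfl

lemma iotaIdx_of_ne (b : Bool) (r : {j : Fin n // j ≠ k} → Bool) {j : Fin n} (hj : j ≠ k) :
    iotaIdx n k b r j = r ⟨j, hj⟩ :=
  dif_neg hj

lemma iotaIdx_restrict (x : Fin n → Bool) : iotaIdx n k (x k) (fun j => x j) = x := by
  funext j
  by_cases hj : j = k
  · subst hj; exact iotaIdx_self j _ _
  · exact iotaIdx_of_ne k _ _ hj

lemma restrict_iotaIdx (b : Bool) (r : {j : Fin n // j ≠ k} → Bool) :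
    (fun j : {j : Fin n // j ≠ k} => iotaIdx n k b r j) = r :=
  funext fun j => iotaIdx_of_ne k b r j.2

lemma flipCoords_insert_map_iotaIdx (D : Finset {j : Fin n // j ≠ k}) (b : Bool)
    (r : {j : Fin n // j ≠ k} → Bool) :
    flipCoords (insert k (D.map (Embedding.subtype _))) (iotaIdx n k b r) =
      iotaIdx n k (!b) (flipCoords D r) := by
  funext j
  by_cases hj : j = k
  · subst hj; simp [iotaIdx_self]
  · simp [iotaIdx_of_ne k _ _ hj, hj]

lemma flipCoords_singleton_iotaIdx (b : Bool) (r : {j : Fin n // j ≠ k} → Bool) :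
    flipCoords {k} (iotaIdx n k b r) = iotaIdx n k (!b) r := by
  simpa using flipCoords_insert_map_iotaIdx k ∅ b r

lemma map_filter_ne_flipCoords (D : Finset (Fin n)) (x : Fin n → Bool) :
    ({j : {j : Fin n // j ≠ k} | x j ≠ flipCoords D x j} : Finset _).map
      (Embedding.subtype _) = D.erase k := by
  ext j
  by_cases hj : j = k
  · simp [hj]
  · by_cases hjD : j ∈ D <;> simp [hj, hjD]

lemma pairWeight_mk (r s : {j : Fin n // j ≠ k} → Bool) :
    pairWeight n k s(r, s) = 1 + hammingDist r s := rfl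

lemma sq_sub_flipProd_iotaIdx (r s : {j : Fin n // j ≠ k} → Bool) (b : Bool) :
    (flipProd A (insert k (({j | r j ≠ s j} : Finset _).map (Embedding.subtype _)))
        (iotaIdx n k b r) -
      flipProd A (insert k (({j | r j ≠ s j} : Finset _).map (Embedding.subtype _)))
        (flipCoords {k} (iotaIdx n k b r))) ^ 2 = minorSq n A k s(r, s) := by
  simp only [flipProd, flipCoords_singleton_iotaIdx, flipCoords_insert_map_iotaIdx,
    flipCoords_filter_ne, Bool.not_not]
  cases b
  · rfl
  · simp only [minorSq, Sym2.lift_mk, Bool.not_true]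
    ring

-- `((r, s), b) ↦ (D, x)` with `x = ι_k(b, r)` and `D = {k} ∪ {j | r j ≠ s j}`, so that
-- `flipCoords D x = ι_k(!b, s)`; the inverse reads `r`, `s`, `b` off `x` and `flipCoords D x`.
theorem sum_flipEnergy_flipProd_eq_sum_minorSq (m : ℕ) :
    ∑ D ∈ powersetCard m univ with k ∈ D, flipEnergy (flipProd A D) {k} =
      ∑ t ∈ ({z | pairWeight n k s(z.1, z.2) = m} : Finset (({j : Fin n // j ≠ k} → Bool) ×
          ({j : Fin n // j ≠ k} → Bool))) ×ˢ (univ : Finset Bool),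
        minorSq n A k s(t.1.1, t.1.2) := by
  symm
  simp only [flipEnergy]
  rw [← sum_product']
  refine sum_nbij'
    (fun t => (insert k (({j | t.1.1 j ≠ t.1.2 j} : Finset _).map (Embedding.subtype _)),
      iotaIdx n k t.2 t.1.1))
    (fun Dx => ((fun j => Dx.2 j, fun j => flipCoords Dx.1 Dx.2 j), Dx.2 k)) ?_ ?_ ?_ ?_ ?_
  · rintro ⟨⟨r, s⟩, b⟩ ht
    simp only [mem_product, mem_filter, mem_univ, true_and, and_true] at ht
    simp only [mem_product, mem_filter, mem_powersetCard, mem_univ, and_true, subset_univ,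
      true_and, mem_insert_self]
    rw [card_insert_of_notMem (by simp), card_map, add_comm]
    exact ht
  · rintro ⟨D, x⟩ hDx
    simp only [mem_product, mem_filter, mem_powersetCard, mem_univ, and_true, subset_univ,
      true_and] at hDx
    simp only [mem_product, mem_filter_univ, mem_univ, and_true, pairWeight_mk, hammingDist]
    rw [← card_map (Embedding.subtype _), map_filter_ne_flipCoords, add_comm,
      card_erase_add_one hDx.2, hDx.1]
  · rintro ⟨⟨r, s⟩, b⟩ -
    simp only [flipCoords_insert_map_iotaIdx, flipCoords_filter_ne, restrict_iotaIdx,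
      iotaIdx_self]
  · rintro ⟨D, x⟩ hDx
    simp only [mem_product, mem_filter, mem_powersetCard, mem_univ, and_true, subset_univ,
      true_and] at hDx
    simp only [map_filter_ne_flipCoords, insert_erase hDx.2, iotaIdx_restrict]
  · rintro ⟨⟨r, s⟩, b⟩ -
    exact (sq_sub_flipProd_iotaIdx A k r s b).symm

theorem sum_flipEnergy_flipProd_eq_four_mul {m : ℕ} (hm : 2 ≤ m) :
    ∑ D ∈ powersetCard m univ with k ∈ D, flipEnergy (flipProd A D) {k} =
      4 * ∑ p ∈ univ.filter (fun p : Sym2 ({j : Fin n // j ≠ k} → Bool) =>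
        ¬p.IsDiag ∧ pairWeight n k p = m), minorSq n A k p := by
  have hoffDiag : ({z | pairWeight n k s(z.1, z.2) = m} :
        Finset (({j : Fin n // j ≠ k} → Bool) × ({j : Fin n // j ≠ k} → Bool))) =
      univ.offDiag.filter (fun z => pairWeight n k s(z.1, z.2) = m) := by
    ext ⟨r, s⟩
    simp only [mem_filter, mem_univ, true_and, mem_offDiag, ne_eq]
    refine ⟨fun h => ⟨?_, h⟩, And.right⟩
    rintro rfl
    rw [pairWeight_mk, hammingDist_self] at h
    omega
  rw [sum_flipEnergy_flipProd_eq_sum_minorSq, sum_product, hoffDiag]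
  simp only [sum_const, card_univ, Fintype.card_bool]
  rw [← smul_sum, sum_offDiag_filter_sym2_mk (pairWeight n k · = m)]
  simp only [nsmul_eq_mul]
  ring

end Flattening

end BinaryTensor

/-- For each `2 ≤ m ≤ n`, the `m`-th piece of `d₂ + ⋯ + d_n - d₁` is non-negative. -/
theorem sos_pieces_nonneg (n : ℕ) (hn : 2 ≤ n) (A : (Fin n → Bool) → ℝ)
    (m : ℕ) (hm : 2 ≤ m) :
    ∑ p ∈ Finset.univ.filter
        (fun p : Sym2 ({j : Fin n // j ≠ (⟨0, by omega⟩ : Fin n)} → Bool) =>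
          ¬ p.IsDiag ∧ pairWeight n ⟨0, by omega⟩ p = m),
        minorSq n A ⟨0, by omega⟩ p ≤
      ∑ k ∈ Finset.univ.erase (⟨0, by omega⟩ : Fin n),
        ∑ p ∈ Finset.univ.filter
          (fun p : Sym2 ({j : Fin n // j ≠ k} → Bool) =>
            ¬ p.IsDiag ∧ pairWeight n k p = m),
          minorSq n A k p := by
  have hle :=
    BinaryTensor.sum_flipEnergy_flipProd_le A (Finset.powersetCard m Finset.univ) ⟨0, by omega⟩
  simp only [BinaryTensor.sum_flipEnergy_flipProd_eq_four_mul A _ hm, ← Finset.mul_sum] at hle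
  linarith
end

section
/- Let n ≥ 3, let j ∈ {2,…,n}, let M be a 2×2 real matrix and v^{(k)} ∈ ℝ² for each k ∈ {2,…,n}∖{j}, and define the binary tensor A(i₁,…,i_n) = M_{i₁ i_j} · Π_{k∈{2,…,n}∖{j}} v^{(k)}_{i_k}. Then d_k(A) = 0 for all k ∉ {1,j} and d₁(A) = d_j(A); in particular d₁(A) = d₂(A) + ⋯ + d_n(A). -/
lemma gram_zero {n : ℕ} (A : (Fin n → Bool) → ℝ) (k : Fin n) (c : Bool → ℝ)
    (g : ({i : Fin n // i ≠ k} → Bool) → ℝ)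
    (h : ∀ b r, A (iotaIdx n k b r) = c b * g r) : gramDet n A k = 0 := by
  have key : ∀ b b' : Bool, (∑ r : {i : Fin n // i ≠ k} → Bool,
      A (iotaIdx n k b r) * A (iotaIdx n k b' r))
      = (c b * c b') * ∑ r : {i : Fin n // i ≠ k} → Bool, g r ^ 2 := by
    intro b b'
    rw [Finset.mul_sum]
    refine Finset.sum_congr rfl fun r _ => ?_
    rw [h, h]; ring
  unfold gramDet
  simp only [pow_two]
  simp only [key]
  ring

lemma gram_split {n : ℕ} (A : (Fin n → Bool) → ℝ) (k : Fin n) {X : Type} [Fintype X] [DecidableEq X]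
    (e : (Bool × (X → Bool)) ≃ ({i : Fin n // i ≠ k} → Bool))
    (N : Bool → Bool → ℝ) (W : (X → Bool) → ℝ)
    (h : ∀ b c s, A (iotaIdx n k b (e (c, s))) = N b c * W s) :
    gramDet n A k =
      (N false false * N true true - N false true * N true false) ^ 2 *
        (∑ s : X → Bool, (W s) ^ 2) ^ 2 := by
  have key : ∀ b b' : Bool, (∑ r : {i : Fin n // i ≠ k} → Bool,
      A (iotaIdx n k b r) * A (iotaIdx n k b' r))
      = (∑ c : Bool, N b c * N b' c) * ∑ s : X → Bool, W s * W s := by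
    intro b b'
    rw [← Equiv.sum_comp e (fun r => A (iotaIdx n k b r) * A (iotaIdx n k b' r))]
    rw [Fintype.sum_prod_type, Finset.sum_mul]
    refine Finset.sum_congr rfl fun c _ => ?_
    rw [Finset.mul_sum]
    refine Finset.sum_congr rfl fun s _ => ?_
    simp only [h]
    ring
  unfold gramDet
  simp only [pow_two]
  simp only [key]
  simp only [Fintype.sum_bool]
  ring

/-- Conversely, the tensor product of a `2×2` matrix (in directions 1 and j) with vectors
in the remaining directions has `d_k = 0` for `k ∉ {1, j}` and `d₁ = d_j`; in particular
`d₁ = d₂ + ⋯ + d_n`. -/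
theorem tensor_product_on_boundary (n : ℕ) (hn : 3 ≤ n) (j : Fin n)
    (hj : j ≠ ⟨0, by omega⟩) (M : Bool → Bool → ℝ) (v : Fin n → Bool → ℝ)
    (A : (Fin n → Bool) → ℝ)
    (hA : ∀ i : Fin n → Bool,
      A i = M (i ⟨0, by omega⟩) (i j) *
        ∏ k ∈ (Finset.univ.erase (⟨0, by omega⟩ : Fin n)).erase j, v k (i k)) :
    (∀ k : Fin n, k ≠ ⟨0, by omega⟩ → k ≠ j → gramDet n A k = 0) ∧
    gramDet n A ⟨0, by omega⟩ = gramDet n A j ∧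
    gramDet n A ⟨0, by omega⟩ =
      ∑ k ∈ Finset.univ.erase (⟨0, by omega⟩ : Fin n), gramDet n A k := by
  have hz3 : 0 < n := by omega
  set z : Fin n := ⟨0, hz3⟩ with hzdef
  have hj0 : j ≠ z := hj
  set S : Finset (Fin n) := (Finset.univ.erase z).erase j with hSdef
  have hmem : ∀ x : Fin n, x ∈ S ↔ x ≠ j ∧ x ≠ z := by
    intro x; simp [hSdef, Finset.mem_erase]
  have hA' : ∀ i : Fin n → Bool, A i = M (i z) (i j) * ∏ k ∈ S, v k (i k) := fun i => hA i
  -- Part 1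
  have part1 : ∀ k : Fin n, k ≠ z → k ≠ j → gramDet n A k = 0 := by
    intro k hk0 hkj
    apply gram_zero A k (v k)
      (fun r => M (r ⟨z, Ne.symm hk0⟩) (r ⟨j, Ne.symm hkj⟩) *
        ∏ x ∈ S.erase k, if h : x = k then 1 else v x (r ⟨x, h⟩))
    intro b r
    rw [hA']
    have hkS : k ∈ S := (hmem k).2 ⟨hkj, hk0⟩
    rw [← Finset.mul_prod_erase S _ hkS]
    have h1 : iotaIdx n k b r z = r ⟨z, Ne.symm hk0⟩ := by
      simp only [iotaIdx]; exact dif_neg (Ne.symm hk0)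
    have h2 : iotaIdx n k b r j = r ⟨j, Ne.symm hkj⟩ := by
      simp only [iotaIdx]; exact dif_neg (Ne.symm hkj)
    have h3 : iotaIdx n k b r k = b := by
      simp [iotaIdx]
    have h4 : ∏ x ∈ S.erase k, v x (iotaIdx n k b r x)
        = ∏ x ∈ S.erase k, if h : x = k then 1 else v x (r ⟨x, h⟩) := by
      refine Finset.prod_congr rfl fun x hx => ?_
      have hxk : x ≠ k := (Finset.mem_erase.1 hx).1
      rw [dif_neg hxk]
      refine congrArg (v x) ?_
      simp only [iotaIdx]; exact dif_neg hxk
    rw [h1, h2, h3, h4]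
    ring
  -- Part 2
  have Q : ℝ := 0
  let X := {x : Fin n // x ≠ j ∧ x ≠ z}
  let e0 : (Bool × (X → Bool)) ≃ ({i : Fin n // i ≠ z} → Bool) :=
  { toFun := fun p i => if h : (i : Fin n) = j then p.1 else p.2 ⟨i.1, ⟨h, i.2⟩⟩
    invFun := fun r => (r ⟨j, hj0⟩, fun x => r ⟨x.1, x.2.2⟩)
    left_inv := by
      rintro ⟨c, s⟩
      refine Prod.ext ?_ ?_
      · simp
      · funext x
        exact dif_neg x.2.1
    right_inv := by
      intro r; funext i
      by_cases h : (i : Fin n) = j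
      · simp only [dif_pos h]
        exact congrArg r (Subtype.ext h.symm)
      · exact dif_neg h }
  let ej : (Bool × (X → Bool)) ≃ ({i : Fin n // i ≠ j} → Bool) :=
  { toFun := fun p i => if h : (i : Fin n) = z then p.1 else p.2 ⟨i.1, ⟨i.2, h⟩⟩
    invFun := fun r => (r ⟨z, Ne.symm hj0⟩, fun x => r ⟨x.1, x.2.1⟩)
    left_inv := by
      rintro ⟨c, s⟩
      refine Prod.ext ?_ ?_
      · simp
      · funext x
        exact dif_neg x.2.2
    right_inv := by
      intro r; funext i
      by_cases h : (i : Fin n) = z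
      · simp only [dif_pos h]
        exact congrArg r (Subtype.ext h.symm)
      · exact dif_neg h }
  have h0 : ∀ (b c : Bool) (s : X → Bool),
      A (iotaIdx n z b (e0 (c, s))) = M b c * ∏ x : X, v x.1 (s x) := by
    intro b c s
    rw [hA']
    have h1 : iotaIdx n z b (e0 (c, s)) z = b := by
      simp [iotaIdx]
    have h2 : iotaIdx n z b (e0 (c, s)) j = c := by
      simp [iotaIdx, e0, hj0]
    have h3 : ∏ x ∈ S, v x (iotaIdx n z b (e0 (c, s)) x) = ∏ x : X, v x.1 (s x) := by
      rw [Finset.prod_subtype S hmem (fun x => v x (iotaIdx n z b (e0 (c, s)) x))]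
      refine Finset.prod_congr rfl fun x _ => congrArg (v x.1) ?_
      have hxz : (x : Fin n) ≠ z := x.2.2
      have hxj : (x : Fin n) ≠ j := x.2.1
      show iotaIdx n z b (e0 (c, s)) x.1 = s x
      have step1 : iotaIdx n z b (e0 (c, s)) x.1 = e0 (c, s) ⟨x.1, hxz⟩ := by
        simp only [iotaIdx]; exact dif_neg hxz
      rw [step1]
      exact dif_neg hxj
    rw [h1, h2, h3]
  have hjj : ∀ (b c : Bool) (s : X → Bool),
      A (iotaIdx n j b (ej (c, s))) = M c b * ∏ x : X, v x.1 (s x) := by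
    intro b c s
    rw [hA']
    have h1 : iotaIdx n j b (ej (c, s)) j = b := by
      simp [iotaIdx]
    have h2 : iotaIdx n j b (ej (c, s)) z = c := by
      simp [iotaIdx, ej, Ne.symm hj0]
    have h3 : ∏ x ∈ S, v x (iotaIdx n j b (ej (c, s)) x) = ∏ x : X, v x.1 (s x) := by
      rw [Finset.prod_subtype S hmem (fun x => v x (iotaIdx n j b (ej (c, s)) x))]
      refine Finset.prod_congr rfl fun x _ => congrArg (v x.1) ?_
      have hxz : (x : Fin n) ≠ z := x.2.2
      have hxj : (x : Fin n) ≠ j := x.2.1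
      show iotaIdx n j b (ej (c, s)) x.1 = s x
      have step1 : iotaIdx n j b (ej (c, s)) x.1 = ej (c, s) ⟨x.1, hxj⟩ := by
        simp only [iotaIdx]; exact dif_neg hxj
      rw [step1]
      exact dif_neg hxz
    rw [h1, h2, h3]
  have g1 := gram_split A z e0 M (fun s => ∏ x : X, v x.1 (s x)) h0
  have g2 := gram_split A j ej (fun b c => M c b) (fun s => ∏ x : X, v x.1 (s x)) hjj
  have part2 : gramDet n A z = gramDet n A j := by
    rw [g1, g2]; ring
  have part3 : ∑ k ∈ Finset.univ.erase z, gramDet n A k = gramDet n A j := by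
    rw [Finset.sum_eq_single_of_mem j (Finset.mem_erase.2 ⟨hj0, Finset.mem_univ j⟩)]
    intro k hk hkj
    exact part1 k (Finset.mem_erase.1 hk).1 hkj
  exact ⟨part1, part2, part2.trans part3.symm⟩
end
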